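/- arXiv:1407.3011 — 10 statements merged into one kernel-verified Lean document; each statement's English description precedes it below -/
import Mathlib

section
/- Let n ∈ ℝ and let D ⊆ ℝ² be an open set on which x + y > 0. Let U, V : D → ℝ be smooth functions with U_x > 0, U_y > 0, V_x > 0, V_y > 0 on D, satisfying the Bäcklund relations √(U_x) − √(V_x) = √(U_y) + √(V_y) and (√(U_x) − √(V_x))² = (2n − 1)(U − V)/(x + y) at every point of D. Then U satisfies the Goursat equation U_{xy} = 2(n−1)√(U_x U_y)/(x + y) and V satisfies the Goursat equation V_{xy} = 2n√(V_x V_y)/(x + y) on D. -/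
noncomputable section

open Real

/-- Partial derivative with respect to the first variable. -/
def pdx (f : ℝ → ℝ → ℝ) (x y : ℝ) : ℝ := deriv (fun t => f t y) x

/-- Partial derivative with respect to the second variable. -/
def pdy (f : ℝ → ℝ → ℝ) (x y : ℝ) : ℝ := deriv (fun t => f x t) y

open Filter Topology

namespace GoursatAux

variable {D : Set (ℝ × ℝ)} {f : ℝ → ℝ → ℝ} {p : ℝ × ℝ}

lemma evX (hD : IsOpen D) (hp : p ∈ D) : ∀ᶠ t in 𝓝 p.1, (t, p.2) ∈ D := by
  have hc : Continuous fun t : ℝ => ((t, p.2) : ℝ × ℝ) := continuous_id.prodMk continuous_const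
  exact (hD.preimage hc).eventually_mem (by simp [Set.mem_preimage, hp])

lemma evY (hD : IsOpen D) (hp : p ∈ D) : ∀ᶠ t in 𝓝 p.2, (p.1, t) ∈ D := by
  have hc : Continuous fun t : ℝ => ((p.1, t) : ℝ × ℝ) := continuous_const.prodMk continuous_id
  exact (hD.preimage hc).eventually_mem (by simp [Set.mem_preimage, hp])

lemma pdx_key (hD : IsOpen D)
    (hf : ContDiffOn ℝ (⊤ : ℕ∞) (fun q : ℝ × ℝ => f q.1 q.2) D) (hp : p ∈ D) :
    HasDerivAt (fun t => f t p.2) (pdx f p.1 p.2) p.1 ∧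
      pdx f p.1 p.2 = fderiv ℝ (fun q : ℝ × ℝ => f q.1 q.2) p (1, 0) := by
  have hFd : DifferentiableAt ℝ (fun q : ℝ × ℝ => f q.1 q.2) p :=
    (hf.contDiffAt (hD.mem_nhds hp)).differentiableAt (by simp)
  have hFd' : HasFDerivAt (fun q : ℝ × ℝ => f q.1 q.2)
      (fderiv ℝ (fun q : ℝ × ℝ => f q.1 q.2) p) (p.1, p.2) := by
    rw [Prod.mk.eta]; exact hFd.hasFDerivAt
  have hline : HasDerivAt (fun t : ℝ => ((t, p.2) : ℝ × ℝ)) (1, 0) p.1 :=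
    HasDerivAt.prodMk (hasDerivAt_id p.1) (hasDerivAt_const p.1 p.2)
  have h : HasDerivAt (fun t => f t p.2)
      (fderiv ℝ (fun q : ℝ × ℝ => f q.1 q.2) p (1, 0)) p.1 :=
    by have := hFd'.comp_hasDerivAt p.1 hline; exact this
  have e : pdx f p.1 p.2 = fderiv ℝ (fun q : ℝ × ℝ => f q.1 q.2) p (1, 0) := h.deriv
  exact ⟨e ▸ h, e⟩

lemma pdy_key (hD : IsOpen D)
    (hf : ContDiffOn ℝ (⊤ : ℕ∞) (fun q : ℝ × ℝ => f q.1 q.2) D) (hp : p ∈ D) :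
    HasDerivAt (fun t => f p.1 t) (pdy f p.1 p.2) p.2 ∧
      pdy f p.1 p.2 = fderiv ℝ (fun q : ℝ × ℝ => f q.1 q.2) p (0, 1) := by
  have hFd : DifferentiableAt ℝ (fun q : ℝ × ℝ => f q.1 q.2) p :=
    (hf.contDiffAt (hD.mem_nhds hp)).differentiableAt (by simp)
  have hFd' : HasFDerivAt (fun q : ℝ × ℝ => f q.1 q.2)
      (fderiv ℝ (fun q : ℝ × ℝ => f q.1 q.2) p) (p.1, p.2) := by
    rw [Prod.mk.eta]; exact hFd.hasFDerivAt
  have hline : HasDerivAt (fun t : ℝ => ((p.1, t) : ℝ × ℝ)) (0, 1) p.2 :=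
    HasDerivAt.prodMk (hasDerivAt_const p.2 p.1) (hasDerivAt_id p.2)
  have h : HasDerivAt (fun t => f p.1 t)
      (fderiv ℝ (fun q : ℝ × ℝ => f q.1 q.2) p (0, 1)) p.2 :=
    by have := hFd'.comp_hasDerivAt p.2 hline; exact this
  have e : pdy f p.1 p.2 = fderiv ℝ (fun q : ℝ × ℝ => f q.1 q.2) p (0, 1) := h.deriv
  exact ⟨e ▸ h, e⟩

lemma pdxy_key (hD : IsOpen D)
    (hf : ContDiffOn ℝ (⊤ : ℕ∞) (fun q : ℝ × ℝ => f q.1 q.2) D) (hp : p ∈ D) :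
    HasDerivAt (fun t => pdy f t p.2) (pdx (pdy f) p.1 p.2) p.1 ∧
      HasDerivAt (fun t => pdx f p.1 t) (pdx (pdy f) p.1 p.2) p.2 := by
  set F := fun q : ℝ × ℝ => f q.1 q.2 with hF
  have hC : ∀ q ∈ D, ContDiffAt ℝ (⊤ : ℕ∞) F q := fun q hq => hf.contDiffAt (hD.mem_nhds hq)
  have hdF' : DifferentiableAt ℝ (fderiv ℝ F) p :=
    ((hC p hp).fderiv_right (m := 1) (WithTop.coe_le_coe.mpr le_top)).differentiableAt one_ne_zero
  have hEval1 : HasDerivAt (fun t => fderiv ℝ F (t, p.2) (0, 1))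
      (fderiv ℝ (fderiv ℝ F) p (1, 0) (0, 1)) p.1 := by
    have h1 : HasFDerivAt (fun q => fderiv ℝ F q (0, 1))
        ((fderiv ℝ F p).comp (0 : ℝ × ℝ →L[ℝ] ℝ × ℝ)
          + (fderiv ℝ (fderiv ℝ F) p).flip ((0 : ℝ), (1 : ℝ))) (p.1, p.2) := by
      rw [Prod.mk.eta]
      exact hdF'.hasFDerivAt.clm_apply (hasFDerivAt_const _ _)
    have hline : HasDerivAt (fun t : ℝ => ((t, p.2) : ℝ × ℝ)) (1, 0) p.1 :=
      HasDerivAt.prodMk (hasDerivAt_id p.1) (hasDerivAt_const p.1 p.2)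
    have := h1.comp_hasDerivAt p.1 hline
    simp at this
    exact this
  have hev1 : (fun t => pdy f t p.2) =ᶠ[𝓝 p.1] fun t => fderiv ℝ F (t, p.2) (0, 1) := by
    filter_upwards [evX hD hp] with t ht
    exact (pdy_key hD hf ht).2
  have hA : HasDerivAt (fun t => pdy f t p.2)
      (fderiv ℝ (fderiv ℝ F) p (1, 0) (0, 1)) p.1 :=
    hEval1.congr_of_eventuallyEq hev1
  have eA : pdx (pdy f) p.1 p.2 = fderiv ℝ (fderiv ℝ F) p (1, 0) (0, 1) := hA.deriv
  have hEval2 : HasDerivAt (fun t => fderiv ℝ F (p.1, t) (1, 0))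
      (fderiv ℝ (fderiv ℝ F) p (0, 1) (1, 0)) p.2 := by
    have h1 : HasFDerivAt (fun q => fderiv ℝ F q (1, 0))
        ((fderiv ℝ F p).comp (0 : ℝ × ℝ →L[ℝ] ℝ × ℝ)
          + (fderiv ℝ (fderiv ℝ F) p).flip ((1 : ℝ), (0 : ℝ))) (p.1, p.2) := by
      rw [Prod.mk.eta]
      exact hdF'.hasFDerivAt.clm_apply (hasFDerivAt_const _ _)
    have hline : HasDerivAt (fun t : ℝ => ((p.1, t) : ℝ × ℝ)) (0, 1) p.2 :=
      HasDerivAt.prodMk (hasDerivAt_const p.2 p.1) (hasDerivAt_id p.2)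
    have := h1.comp_hasDerivAt p.2 hline
    simp at this
    exact this
  have hev2 : (fun t => pdx f p.1 t) =ᶠ[𝓝 p.2] fun t => fderiv ℝ F (p.1, t) (1, 0) := by
    filter_upwards [evY hD hp] with t ht
    exact (pdx_key hD hf ht).2
  have hB : HasDerivAt (fun t => pdx f p.1 t)
      (fderiv ℝ (fderiv ℝ F) p (0, 1) (1, 0)) p.2 :=
    hEval2.congr_of_eventuallyEq hev2
  have hsymm : fderiv ℝ (fderiv ℝ F) p (1, 0) (0, 1)
      = fderiv ℝ (fderiv ℝ F) p (0, 1) (1, 0) := by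
    apply second_derivative_symmetric_of_eventually
    · filter_upwards [hD.eventually_mem hp] with q hq
      exact ((hC q hq).differentiableAt (by simp)).hasFDerivAt
    · exact hdF'.hasFDerivAt
  refine ⟨eA ▸ hA, ?_⟩
  rw [eA, hsymm]
  exact hB

lemma algebra (n t a b c d P Q : ℝ) (ht : 0 < t) (ha : 0 < a) (hb : 0 < b)
    (hc : 0 < c) (hd : 0 < d) (hs : a - b = c + d)
    (hEX : ((P * d + Q * c) * (c + d) * t) / (c * d) + (c + d) ^ 2
      - (2 * n - 1) * (a ^ 2 - b ^ 2) = 0)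
    (hEY : ((P * b - Q * a) * (a - b) * t) / (a * b) + (a - b) ^ 2
      - (2 * n - 1) * (c ^ 2 - d ^ 2) = 0) :
    P = 2 * (n - 1) * (a * c) / t ∧ Q = 2 * n * (b * d) / t := by
  have h3 : (P * d + Q * c) * (c + d) * t
      = ((2 * n - 1) * (a ^ 2 - b ^ 2) - (c + d) ^ 2) * (c * d) := by
    have h4 : ((P * d + Q * c) * (c + d) * t) / (c * d)
        = (2 * n - 1) * (a ^ 2 - b ^ 2) - (c + d) ^ 2 := by linarith
    rwa [div_eq_iff (mul_pos hc hd).ne'] at h4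
  have h3' : (P * b - Q * a) * (a - b) * t
      = ((2 * n - 1) * (c ^ 2 - d ^ 2) - (a - b) ^ 2) * (a * b) := by
    have h4 : ((P * b - Q * a) * (a - b) * t) / (a * b)
        = (2 * n - 1) * (c ^ 2 - d ^ 2) - (a - b) ^ 2 := by linarith
    rwa [div_eq_iff (mul_pos ha hb).ne'] at h4
  have hX : (P * d + Q * c) * t = c * d * ((2 * n - 2) * a + 2 * n * b) := by
    apply mul_left_cancel₀ (add_pos hc hd).ne'
    linear_combination h3 + (c * d * ((2 * n - 1) * (a + b) + (c + d))) * hs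
  have hY : (P * b - Q * a) * t = a * b * ((2 * n - 2) * c - 2 * n * d) := by
    apply mul_left_cancel₀ (show a - b ≠ 0 by rw [hs]; exact (add_pos hc hd).ne')
    linear_combination h3' - (a * b * ((2 * n - 1) * (c - d) + (a - b))) * hs
  have hden : (0 : ℝ) < a * d + b * c := add_pos (mul_pos ha hd) (mul_pos hb hc)
  constructor
  · rw [eq_div_iff ht.ne']
    apply mul_left_cancel₀ hden.ne'
    linear_combination a * hX + c * hY
  · rw [eq_div_iff ht.ne']
    apply mul_left_cancel₀ hden.ne'
    linear_combination b * hX - d * hY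

end GoursatAux

/-- The Bäcklund transformation between the Goursat equations with parameters `n-1` and `n`:
if smooth `U`, `V` on an open set `D ⊆ ℝ²` with `x + y > 0` and positive first derivatives
satisfy `√U_x − √V_x = √U_y + √V_y` and `(√U_x − √V_x)² = (2n−1)(U−V)/(x+y)`, then `U` solves
the Goursat equation with parameter `n − 1` and `V` the Goursat equation with parameter `n`. -/
theorem goursat_backlund (n : ℝ) (D : Set (ℝ × ℝ)) (hD : IsOpen D)
    (hxy : ∀ p ∈ D, 0 < p.1 + p.2)
    (U V : ℝ → ℝ → ℝ)
    (hU : ContDiffOn ℝ (⊤ : ℕ∞) (fun p : ℝ × ℝ => U p.1 p.2) D)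
    (hV : ContDiffOn ℝ (⊤ : ℕ∞) (fun p : ℝ × ℝ => V p.1 p.2) D)
    (hUx : ∀ p ∈ D, 0 < pdx U p.1 p.2) (hUy : ∀ p ∈ D, 0 < pdy U p.1 p.2)
    (hVx : ∀ p ∈ D, 0 < pdx V p.1 p.2) (hVy : ∀ p ∈ D, 0 < pdy V p.1 p.2)
    (hB1 : ∀ p ∈ D, Real.sqrt (pdx U p.1 p.2) - Real.sqrt (pdx V p.1 p.2)
        = Real.sqrt (pdy U p.1 p.2) + Real.sqrt (pdy V p.1 p.2))
    (hB2 : ∀ p ∈ D, (Real.sqrt (pdx U p.1 p.2) - Real.sqrt (pdx V p.1 p.2)) ^ 2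
        = (2 * n - 1) * (U p.1 p.2 - V p.1 p.2) / (p.1 + p.2)) :
    (∀ p ∈ D, pdx (pdy U) p.1 p.2
        = 2 * (n - 1) * Real.sqrt (pdx U p.1 p.2 * pdy U p.1 p.2) / (p.1 + p.2)) ∧
    (∀ p ∈ D, pdx (pdy V) p.1 p.2
        = 2 * n * Real.sqrt (pdx V p.1 p.2 * pdy V p.1 p.2) / (p.1 + p.2)) := by
  have main : ∀ p ∈ D,
      pdx (pdy U) p.1 p.2 = 2 * (n - 1)
          * (Real.sqrt (pdx U p.1 p.2) * Real.sqrt (pdy U p.1 p.2)) / (p.1 + p.2) ∧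
      pdx (pdy V) p.1 p.2 = 2 * n
          * (Real.sqrt (pdx V p.1 p.2) * Real.sqrt (pdy V p.1 p.2)) / (p.1 + p.2) := by
    intro p hp
    have ht : 0 < p.1 + p.2 := hxy p hp
    obtain ⟨hU1, -⟩ := GoursatAux.pdx_key hD hU hp
    obtain ⟨hV1, -⟩ := GoursatAux.pdx_key hD hV hp
    obtain ⟨hU2, -⟩ := GoursatAux.pdy_key hD hU hp
    obtain ⟨hV2, -⟩ := GoursatAux.pdy_key hD hV hp
    obtain ⟨hUyx, hUxy⟩ := GoursatAux.pdxy_key hD hU hp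
    obtain ⟨hVyx, hVxy⟩ := GoursatAux.pdxy_key hD hV hp
    -- x-direction equation
    have hsU : HasDerivAt (fun t => Real.sqrt (pdy U t p.2))
        (pdx (pdy U) p.1 p.2 / (2 * Real.sqrt (pdy U p.1 p.2))) p.1 :=
      hUyx.sqrt (hUy p hp).ne'
    have hsV : HasDerivAt (fun t => Real.sqrt (pdy V t p.2))
        (pdx (pdy V) p.1 p.2 / (2 * Real.sqrt (pdy V p.1 p.2))) p.1 :=
      hVyx.sqrt (hVy p hp).ne'
    have hlin : HasDerivAt (fun t : ℝ => t + p.2) 1 p.1 := (hasDerivAt_id p.1).add_const p.2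
    have hphi := (((hsU.add hsV).pow 2).mul hlin).sub ((hU1.sub hV1).const_mul (2 * n - 1))
    have hphi' : HasDerivAt
        (fun t => (Real.sqrt (pdy U t p.2) + Real.sqrt (pdy V t p.2)) ^ 2 * (t + p.2)
          - (2 * n - 1) * (U t p.2 - V t p.2))
        (((pdx (pdy U) p.1 p.2 * Real.sqrt (pdy V p.1 p.2)
            + pdx (pdy V) p.1 p.2 * Real.sqrt (pdy U p.1 p.2))
            * (Real.sqrt (pdy U p.1 p.2) + Real.sqrt (pdy V p.1 p.2)) * (p.1 + p.2))
            / (Real.sqrt (pdy U p.1 p.2) * Real.sqrt (pdy V p.1 p.2))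
          + (Real.sqrt (pdy U p.1 p.2) + Real.sqrt (pdy V p.1 p.2)) ^ 2
          - (2 * n - 1) * (Real.sqrt (pdx U p.1 p.2) ^ 2 - Real.sqrt (pdx V p.1 p.2) ^ 2))
        p.1 := by
      refine hphi.congr_deriv (Eq.symm ?_)
      simp only [Pi.add_apply, Pi.sub_apply, Pi.pow_apply]
      rw [Real.sq_sqrt (hUx p hp).le, Real.sq_sqrt (hVx p hp).le]
      have hcu : Real.sqrt (pdy U p.1 p.2) ≠ 0 := (Real.sqrt_pos.mpr (hUy p hp)).ne'
      have hcv : Real.sqrt (pdy V p.1 p.2) ≠ 0 := (Real.sqrt_pos.mpr (hVy p hp)).ne'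
      field_simp
      ring
    have hzero : (fun t => (Real.sqrt (pdy U t p.2) + Real.sqrt (pdy V t p.2)) ^ 2 * (t + p.2)
          - (2 * n - 1) * (U t p.2 - V t p.2)) =ᶠ[𝓝 p.1] fun _ => (0 : ℝ) := by
      filter_upwards [GoursatAux.evX hD hp] with t htD
      have h1 : Real.sqrt (pdx U t p.2) - Real.sqrt (pdx V t p.2)
          = Real.sqrt (pdy U t p.2) + Real.sqrt (pdy V t p.2) := hB1 (t, p.2) htD
      have h2 : (Real.sqrt (pdx U t p.2) - Real.sqrt (pdx V t p.2)) ^ 2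
          = (2 * n - 1) * (U t p.2 - V t p.2) / (t + p.2) := hB2 (t, p.2) htD
      have hts : 0 < t + p.2 := hxy (t, p.2) htD
      rw [← h1, h2, div_mul_cancel₀ _ hts.ne', sub_self]
    have EqX := (hphi'.congr_of_eventuallyEq hzero.symm).unique (hasDerivAt_const p.1 0)
    -- y-direction equation
    have hsU' : HasDerivAt (fun t => Real.sqrt (pdx U p.1 t))
        (pdx (pdy U) p.1 p.2 / (2 * Real.sqrt (pdx U p.1 p.2))) p.2 :=
      hUxy.sqrt (hUx p hp).ne'
    have hsV' : HasDerivAt (fun t => Real.sqrt (pdx V p.1 t))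
        (pdx (pdy V) p.1 p.2 / (2 * Real.sqrt (pdx V p.1 p.2))) p.2 :=
      hVxy.sqrt (hVx p hp).ne'
    have hlin' : HasDerivAt (fun t : ℝ => p.1 + t) 1 p.2 := (hasDerivAt_id p.2).const_add p.1
    have hpsi := (((hsU'.sub hsV').pow 2).mul hlin').sub ((hU2.sub hV2).const_mul (2 * n - 1))
    have hpsi' : HasDerivAt
        (fun t => (Real.sqrt (pdx U p.1 t) - Real.sqrt (pdx V p.1 t)) ^ 2 * (p.1 + t)
          - (2 * n - 1) * (U p.1 t - V p.1 t))
        (((pdx (pdy U) p.1 p.2 * Real.sqrt (pdx V p.1 p.2)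
            - pdx (pdy V) p.1 p.2 * Real.sqrt (pdx U p.1 p.2))
            * (Real.sqrt (pdx U p.1 p.2) - Real.sqrt (pdx V p.1 p.2)) * (p.1 + p.2))
            / (Real.sqrt (pdx U p.1 p.2) * Real.sqrt (pdx V p.1 p.2))
          + (Real.sqrt (pdx U p.1 p.2) - Real.sqrt (pdx V p.1 p.2)) ^ 2
          - (2 * n - 1) * (Real.sqrt (pdy U p.1 p.2) ^ 2 - Real.sqrt (pdy V p.1 p.2) ^ 2))
        p.2 := by
      refine hpsi.congr_deriv (Eq.symm ?_)
      simp only [Pi.add_apply, Pi.sub_apply, Pi.pow_apply]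
      rw [Real.sq_sqrt (hUy p hp).le, Real.sq_sqrt (hVy p hp).le]
      have hau : Real.sqrt (pdx U p.1 p.2) ≠ 0 := (Real.sqrt_pos.mpr (hUx p hp)).ne'
      have hav : Real.sqrt (pdx V p.1 p.2) ≠ 0 := (Real.sqrt_pos.mpr (hVx p hp)).ne'
      field_simp
      ring
    have hzero' : (fun t => (Real.sqrt (pdx U p.1 t) - Real.sqrt (pdx V p.1 t)) ^ 2 * (p.1 + t)
          - (2 * n - 1) * (U p.1 t - V p.1 t)) =ᶠ[𝓝 p.2] fun _ => (0 : ℝ) := by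
      filter_upwards [GoursatAux.evY hD hp] with t htD
      have h2 : (Real.sqrt (pdx U p.1 t) - Real.sqrt (pdx V p.1 t)) ^ 2
          = (2 * n - 1) * (U p.1 t - V p.1 t) / (p.1 + t) := hB2 (p.1, t) htD
      have hts : 0 < p.1 + t := hxy (p.1, t) htD
      rw [h2, div_mul_cancel₀ _ hts.ne', sub_self]
    have EqY := (hpsi'.congr_of_eventuallyEq hzero'.symm).unique (hasDerivAt_const p.2 0)
    exact GoursatAux.algebra n (p.1 + p.2)
      (Real.sqrt (pdx U p.1 p.2)) (Real.sqrt (pdx V p.1 p.2))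
      (Real.sqrt (pdy U p.1 p.2)) (Real.sqrt (pdy V p.1 p.2))
      (pdx (pdy U) p.1 p.2) (pdx (pdy V) p.1 p.2) ht
      (Real.sqrt_pos.mpr (hUx p hp)) (Real.sqrt_pos.mpr (hVx p hp))
      (Real.sqrt_pos.mpr (hUy p hp)) (Real.sqrt_pos.mpr (hVy p hp))
      (hB1 p hp) EqX EqY
  constructor
  · intro p hp
    rw [Real.sqrt_mul (hUx p hp).le]
    exact (main p hp).1
  · intro p hp
    rw [Real.sqrt_mul (hVx p hp).le]
    exact (main p hp).2
end
end

section
/- Let u₁, u₂ : ℝ² → ℝ be smooth functions satisfying the first-order Bäcklund relations ∂_x u₁ − ∂_x u₂ = √2 · exp((u₁ + u₂)/2) and ∂_y u₁ + ∂_y u₂ = −√2 · exp((−u₁ + u₂)/2) at every point. Then u₁ satisfies the wave equation ∂_x∂_y u₁ = 0 and u₂ satisfies the Liouville equation ∂_x∂_y u₂ = exp(u₂). -/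
noncomputable section

open Real

section Aux

variable {E : Type*} [NormedAddCommGroup E] [NormedSpace ℝ E]

lemma slice_x_hasDerivAt {G : ℝ × ℝ → E} (hG : Differentiable ℝ G) (x y : ℝ) :
    HasDerivAt (fun t => G (t, y)) (fderiv ℝ G (x, y) (1, 0)) x := by
  have h := (hG (x, y)).hasFDerivAt.comp_hasDerivAt x
    ((hasDerivAt_id x).prodMk (hasDerivAt_const x y))
  simpa [Function.comp_def] using h

lemma slice_y_hasDerivAt {G : ℝ × ℝ → E} (hG : Differentiable ℝ G) (x y : ℝ) :
    HasDerivAt (fun t => G (x, t)) (fderiv ℝ G (x, y) (0, 1)) y := by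
  have h := (hG (x, y)).hasFDerivAt.comp_hasDerivAt y
    ((hasDerivAt_const y x).prodMk (hasDerivAt_id y))
  simpa [Function.comp_def] using h

end Aux

lemma pdx_eq (u : ℝ → ℝ → ℝ) (hu : ContDiff ℝ (⊤ : ℕ∞) (fun p : ℝ × ℝ => u p.1 p.2))
    (x y : ℝ) : pdx u x y = fderiv ℝ (fun p : ℝ × ℝ => u p.1 p.2) (x, y) (1, 0) :=
  (slice_x_hasDerivAt (hu.differentiable (by simp)) x y).deriv

lemma pdy_eq (u : ℝ → ℝ → ℝ) (hu : ContDiff ℝ (⊤ : ℕ∞) (fun p : ℝ × ℝ => u p.1 p.2))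
    (x y : ℝ) : pdy u x y = fderiv ℝ (fun p : ℝ × ℝ => u p.1 p.2) (x, y) (0, 1) :=
  (slice_y_hasDerivAt (hu.differentiable (by simp)) x y).deriv

/-- If `u₁, u₂` satisfy the classical first-order Bäcklund relations
`u₁ₓ − u₂ₓ = √2·exp((u₁+u₂)/2)` and `u₁_y + u₂_y = −√2·exp((−u₁+u₂)/2)`,
then `u₁` solves the wave equation and `u₂` solves the Liouville equation. -/
theorem wave_liouville_backlund (u₁ u₂ : ℝ → ℝ → ℝ)
    (h₁ : ContDiff ℝ (⊤ : ℕ∞) (fun p : ℝ × ℝ => u₁ p.1 p.2))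
    (h₂ : ContDiff ℝ (⊤ : ℕ∞) (fun p : ℝ × ℝ => u₂ p.1 p.2))
    (hB1 : ∀ x y : ℝ, pdx u₁ x y - pdx u₂ x y
        = Real.sqrt 2 * Real.exp ((u₁ x y + u₂ x y) / 2))
    (hB2 : ∀ x y : ℝ, pdy u₁ x y + pdy u₂ x y
        = -Real.sqrt 2 * Real.exp ((-u₁ x y + u₂ x y) / 2)) :
    (∀ x y : ℝ, pdx (pdy u₁) x y = 0) ∧
    (∀ x y : ℝ, pdx (pdy u₂) x y = Real.exp (u₂ x y)) := by
  set F₁ : ℝ × ℝ → ℝ := fun p => u₁ p.1 p.2 with hF₁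
  set F₂ : ℝ × ℝ → ℝ := fun p => u₂ p.1 p.2 with hF₂
  set G₁ := fderiv ℝ F₁ with hG₁
  set G₂ := fderiv ℝ F₂ with hG₂
  have hG₁c : ContDiff ℝ (⊤ : ℕ∞) G₁ := h₁.fderiv_right (by simp)
  have hG₂c : ContDiff ℝ (⊤ : ℕ∞) G₂ := h₂.fderiv_right (by simp)
  have hG₁d : Differentiable ℝ G₁ := hG₁c.differentiable (by simp)
  have hG₂d : Differentiable ℝ G₂ := hG₂c.differentiable (by simp)
  -- apply a fixed vector to a CLM-valued function, derivative along x
  have applyx : ∀ (G : ℝ × ℝ → (ℝ × ℝ →L[ℝ] ℝ)), Differentiable ℝ G → ∀ (v : ℝ × ℝ) (x y : ℝ),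
      HasDerivAt (fun t => G (t, y) v) (fderiv ℝ G (x, y) (1, 0) v) x := by
    intro G hG v x y
    exact (ContinuousLinearMap.apply ℝ ℝ v).hasFDerivAt.comp_hasDerivAt x
      (slice_x_hasDerivAt hG x y)
  have applyy : ∀ (G : ℝ × ℝ → (ℝ × ℝ →L[ℝ] ℝ)), Differentiable ℝ G → ∀ (v : ℝ × ℝ) (x y : ℝ),
      HasDerivAt (fun t => G (x, t) v) (fderiv ℝ G (x, y) (0, 1) v) y := by
    intro G hG v x y
    exact (ContinuousLinearMap.apply ℝ ℝ v).hasFDerivAt.comp_hasDerivAt y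
      (slice_y_hasDerivAt hG x y)
  -- mixed partials in terms of second fderiv
  have mixed : ∀ (u : ℝ → ℝ → ℝ) (hu : ContDiff ℝ (⊤ : ℕ∞) (fun p : ℝ × ℝ => u p.1 p.2)) (x y : ℝ),
      pdx (pdy u) x y
        = fderiv ℝ (fderiv ℝ (fun p : ℝ × ℝ => u p.1 p.2)) (x, y) (1, 0) (0, 1) := by
    intro u hu x y
    have hGd : Differentiable ℝ (fderiv ℝ (fun p : ℝ × ℝ => u p.1 p.2)) :=
      (hu.fderiv_right (m := (⊤ : ℕ∞)) (by simp)).differentiable (by simp)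
    have : pdx (pdy u) x y
        = deriv (fun t => fderiv ℝ (fun p : ℝ × ℝ => u p.1 p.2) (t, y) (0, 1)) x := by
      unfold pdx
      congr 1
      funext t
      exact pdy_eq u hu t y
    rw [this]
    exact (applyx _ hGd (0, 1) x y).deriv
  -- derivatives of u along y / x as HasDerivAt with pdy / pdx values
  have hDy : ∀ (u : ℝ → ℝ → ℝ) (hu : ContDiff ℝ (⊤ : ℕ∞) (fun p : ℝ × ℝ => u p.1 p.2)) (x y : ℝ),
      HasDerivAt (fun t => u x t) (pdy u x y) y := by
    intro u hu x y
    have := slice_y_hasDerivAt (E := ℝ) (G := fun p : ℝ × ℝ => u p.1 p.2)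
      (hu.differentiable (by simp)) x y
    rwa [← pdy_eq u hu x y] at this
  have hDx : ∀ (u : ℝ → ℝ → ℝ) (hu : ContDiff ℝ (⊤ : ℕ∞) (fun p : ℝ × ℝ => u p.1 p.2)) (x y : ℝ),
      HasDerivAt (fun t => u t y) (pdx u x y) x := by
    intro u hu x y
    have := slice_x_hasDerivAt (E := ℝ) (G := fun p : ℝ × ℝ => u p.1 p.2)
      (hu.differentiable (by simp)) x y
    rwa [← pdx_eq u hu x y] at this
  -- main pointwise computation
  have key : ∀ x y : ℝ, pdx (pdy u₁) x y = 0 ∧ pdx (pdy u₂) x y = Real.exp (u₂ x y) := by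
    intro x y
    -- differentiate hB1 with respect to y
    have hL1 : HasDerivAt (fun t => pdx u₁ x t - pdx u₂ x t)
        (fderiv ℝ G₁ (x, y) (0, 1) (1, 0) - fderiv ℝ G₂ (x, y) (0, 1) (1, 0)) y := by
      have e1 := applyy G₁ hG₁d (1, 0) x y
      have e2 := applyy G₂ hG₂d (1, 0) x y
      have := e1.sub e2
      apply this.congr_of_eventuallyEq
      filter_upwards with t
      rw [pdx_eq u₁ h₁ x t, pdx_eq u₂ h₂ x t]; rfl
    have hR1 : HasDerivAt (fun t => Real.sqrt 2 * Real.exp ((u₁ x t + u₂ x t) / 2))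
        (Real.sqrt 2 * (Real.exp ((u₁ x y + u₂ x y) / 2)
          * ((pdy u₁ x y + pdy u₂ x y) / 2))) y := by
      exact ((((hDy u₁ h₁ x y).add (hDy u₂ h₂ x y)).div_const 2).exp).const_mul _
    have eq1 : fderiv ℝ G₁ (x, y) (0, 1) (1, 0) - fderiv ℝ G₂ (x, y) (0, 1) (1, 0)
        = - Real.exp (u₂ x y) := by
      have hfun : (fun t => pdx u₁ x t - pdx u₂ x t)
          = fun t => Real.sqrt 2 * Real.exp ((u₁ x t + u₂ x t) / 2) := by
        funext t; exact hB1 x t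
      have := (hfun ▸ hL1).unique hR1
      rw [this, hB2 x y]
      have h2 : Real.sqrt 2 * Real.sqrt 2 = 2 := Real.mul_self_sqrt (by norm_num)
      have hAB : (u₁ x y + u₂ x y) / 2 + (-u₁ x y + u₂ x y) / 2 = u₂ x y := by ring
      calc Real.sqrt 2 * (Real.exp ((u₁ x y + u₂ x y) / 2)
              * (-Real.sqrt 2 * Real.exp ((-u₁ x y + u₂ x y) / 2) / 2))
          = -((Real.sqrt 2 * Real.sqrt 2) * (Real.exp ((u₁ x y + u₂ x y) / 2)
              * Real.exp ((-u₁ x y + u₂ x y) / 2))) / 2 := by ring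
        _ = -Real.exp (u₂ x y) := by rw [h2, ← Real.exp_add, hAB]; ring
    -- differentiate hB2 with respect to x
    have hL2 : HasDerivAt (fun t => pdy u₁ t y + pdy u₂ t y)
        (fderiv ℝ G₁ (x, y) (1, 0) (0, 1) + fderiv ℝ G₂ (x, y) (1, 0) (0, 1)) x := by
      have e1 := applyx G₁ hG₁d (0, 1) x y
      have e2 := applyx G₂ hG₂d (0, 1) x y
      have := e1.add e2
      apply this.congr_of_eventuallyEq
      filter_upwards with t
      rw [pdy_eq u₁ h₁ t y, pdy_eq u₂ h₂ t y]; rfl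
    have hR2 : HasDerivAt (fun t => -Real.sqrt 2 * Real.exp ((-u₁ t y + u₂ t y) / 2))
        (-Real.sqrt 2 * (Real.exp ((-u₁ x y + u₂ x y) / 2)
          * ((-pdx u₁ x y + pdx u₂ x y) / 2))) x := by
      exact ((((hDx u₁ h₁ x y).neg.add (hDx u₂ h₂ x y)).div_const 2).exp).const_mul _
    have eq2 : fderiv ℝ G₁ (x, y) (1, 0) (0, 1) + fderiv ℝ G₂ (x, y) (1, 0) (0, 1)
        = Real.exp (u₂ x y) := by
      have hfun : (fun t => pdy u₁ t y + pdy u₂ t y)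
          = fun t => -Real.sqrt 2 * Real.exp ((-u₁ t y + u₂ t y) / 2) := by
        funext t; exact hB2 t y
      have := (hfun ▸ hL2).unique hR2
      rw [this]
      have hsub : -pdx u₁ x y + pdx u₂ x y
          = -(Real.sqrt 2 * Real.exp ((u₁ x y + u₂ x y) / 2)) := by
        have := hB1 x y; linarith
      rw [hsub]
      have h2 : Real.sqrt 2 * Real.sqrt 2 = 2 := Real.mul_self_sqrt (by norm_num)
      have hAB : (-u₁ x y + u₂ x y) / 2 + (u₁ x y + u₂ x y) / 2 = u₂ x y := by ring
      calc -Real.sqrt 2 * (Real.exp ((-u₁ x y + u₂ x y) / 2)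
              * (-(Real.sqrt 2 * Real.exp ((u₁ x y + u₂ x y) / 2)) / 2))
          = (Real.sqrt 2 * Real.sqrt 2) * (Real.exp ((-u₁ x y + u₂ x y) / 2)
              * Real.exp ((u₁ x y + u₂ x y) / 2)) / 2 := by ring
        _ = Real.exp (u₂ x y) := by rw [h2, ← Real.exp_add, hAB]; ring
    -- symmetry of second derivatives
    have sym1 : fderiv ℝ G₁ (x, y) (0, 1) (1, 0) = fderiv ℝ G₁ (x, y) (1, 0) (0, 1) :=
      (h₁.contDiffAt.isSymmSndFDerivAt (by norm_num; exact WithTop.coe_le_coe.mpr le_top)) (0, 1) (1, 0)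
    have sym2 : fderiv ℝ G₂ (x, y) (0, 1) (1, 0) = fderiv ℝ G₂ (x, y) (1, 0) (0, 1) :=
      (h₂.contDiffAt.isSymmSndFDerivAt (by norm_num; exact WithTop.coe_le_coe.mpr le_top)) (0, 1) (1, 0)
    rw [sym1, sym2] at eq1
    rw [mixed u₁ h₁ x y, mixed u₂ h₂ x y]
    have e1 : fderiv ℝ (fun p : ℝ × ℝ => u₁ p.1 p.2) = G₁ := rfl
    have e2 : fderiv ℝ (fun p : ℝ × ℝ => u₂ p.1 p.2) = G₂ := rfl
    rw [e1, e2]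
    constructor <;> linarith
  exact ⟨fun x y => (key x y).1, fun x y => (key x y).2⟩
end
end

section
/- Let V, W : ℝ² → ℝ be smooth functions satisfying V_y = −e^W and W_x = −e^V at every point (x, y) ∈ ℝ². Define u₃(x, y) := y·e^{W−V} − e^{−V} + x. Then at every point where u₃ ≠ x, the function u₃ satisfies the equation ∂_x∂_y u₃ = (∂_x u₃)(∂_y u₃)/(u₃ − x). -/
noncomputable section

open Real

private lemma curve_fst (f : ℝ × ℝ → ℝ) (hf : Differentiable ℝ f) (x y : ℝ) :
    HasDerivAt (fun t => f (t, y)) (fderiv ℝ f (x, y) (1, 0)) x := by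
  have hc : HasDerivAt (fun t : ℝ => (t, y)) ((1 : ℝ), (0 : ℝ)) x :=
    (hasDerivAt_id x).prodMk (hasDerivAt_const x y)
  exact (hf (x, y)).hasFDerivAt.comp_hasDerivAt x hc

private lemma curve_snd (f : ℝ × ℝ → ℝ) (hf : Differentiable ℝ f) (x y : ℝ) :
    HasDerivAt (fun t => f (x, t)) (fderiv ℝ f (x, y) (0, 1)) y := by
  have hc : HasDerivAt (fun t : ℝ => (x, t)) ((0 : ℝ), (1 : ℝ)) y :=
    (hasDerivAt_const y x).prodMk (hasDerivAt_id y)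
  exact (hf (x, y)).hasFDerivAt.comp_hasDerivAt y hc

/-- Clairaut-type: the x-derivative of `pdy f` equals the y-derivative of `pdx f`. -/
private lemma clairaut (f : ℝ × ℝ → ℝ) (hf : ContDiff ℝ (⊤ : ℕ∞) f) (x y : ℝ) :
    HasDerivAt (fun t => deriv (fun s => f (t, s)) y)
      (deriv (fun s => fderiv ℝ f (x, s) (1, 0)) y) x := by
  have hdiff : Differentiable ℝ f := hf.differentiable (by simp)
  have hf' : ContDiff ℝ (⊤ : ℕ∞) (fderiv ℝ f) := hf.fderiv_right (by exact_mod_cast le_top)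
  have hf'd : Differentiable ℝ (fderiv ℝ f) := hf'.differentiable (by simp)
  -- second derivative at (x,y)
  set f'' := fderiv ℝ (fderiv ℝ f) (x, y) with hf''
  have hsymm : ∀ v w : ℝ × ℝ, f'' v w = f'' w v :=
    second_derivative_symmetric (fun p => (hdiff p).hasFDerivAt) (hf'd (x, y)).hasFDerivAt
  -- the function t ↦ pdy f t y equals t ↦ fderiv f (t,y) (0,1)
  have key : ∀ t s : ℝ, deriv (fun s => f (t, s)) s = fderiv ℝ f (t, s) (0, 1) := fun t s =>
    (curve_snd f hdiff t s).deriv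
  -- derivative of t ↦ fderiv f (t,y) (0,1) at x is f'' (1,0) (0,1)
  have h1 : HasDerivAt (fun t => fderiv ℝ f (t, y) (0, 1)) (f'' (1, 0) (0, 1)) x := by
    have hcurve : HasDerivAt (fun t => fderiv ℝ f (t, y)) (f'' (1, 0)) x := by
      have hc : HasDerivAt (fun t : ℝ => (t, y)) ((1 : ℝ), (0 : ℝ)) x :=
        (hasDerivAt_id x).prodMk (hasDerivAt_const x y)
      exact
        (hf'd (x, y)).hasFDerivAt.comp_hasDerivAt x hc
    simpa using hcurve.clm_apply (hasDerivAt_const x ((0 : ℝ), (1 : ℝ)))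
  have h2 : HasDerivAt (fun s => fderiv ℝ f (x, s) (1, 0)) (f'' (0, 1) (1, 0)) y := by
    have hcurve : HasDerivAt (fun s => fderiv ℝ f (x, s)) (f'' (0, 1)) y := by
      have hc : HasDerivAt (fun s : ℝ => (x, s)) ((0 : ℝ), (1 : ℝ)) y :=
        (hasDerivAt_const y x).prodMk (hasDerivAt_id y)
      exact
        (hf'd (x, y)).hasFDerivAt.comp_hasDerivAt y hc
    simpa using hcurve.clm_apply (hasDerivAt_const y ((1 : ℝ), (0 : ℝ)))
  have heq : (fun t => deriv (fun s => f (t, s)) y) = fun t => fderiv ℝ f (t, y) (0, 1) :=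
    funext fun t => key t y
  rw [heq, h2.deriv, ← hsymm (1, 0) (0, 1)]
  exact h1

/-- If smooth `V, W` satisfy the Bäcklund system `V_y = −e^W`, `W_x = −e^V`, then
`u₃ = y·e^{W−V} − e^{−V} + x` satisfies `u₃ₓᵧ = u₃ₓ u₃ᵧ/(u₃ − x)` wherever `u₃ ≠ x`. -/
theorem backlund_system_u3 (V W : ℝ → ℝ → ℝ)
    (hV : ContDiff ℝ (⊤ : ℕ∞) (fun p : ℝ × ℝ => V p.1 p.2))
    (hW : ContDiff ℝ (⊤ : ℕ∞) (fun p : ℝ × ℝ => W p.1 p.2))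
    (h1 : ∀ x y : ℝ, pdy V x y = -Real.exp (W x y))
    (h2 : ∀ x y : ℝ, pdx W x y = -Real.exp (V x y))
    (u₃ : ℝ → ℝ → ℝ)
    (hu₃ : u₃ = fun x y => y * Real.exp (W x y - V x y) - Real.exp (-V x y) + x) :
    ∀ x y : ℝ, u₃ x y ≠ x →
      pdx (pdy u₃) x y = pdx u₃ x y * pdy u₃ x y / (u₃ x y - x) := by
  have hVd : Differentiable ℝ (fun p : ℝ × ℝ => V p.1 p.2) := hV.differentiable (by simp)
  have hWd : Differentiable ℝ (fun p : ℝ × ℝ => W p.1 p.2) := hW.differentiable (by simp)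
  -- basic partial-derivative facts
  have hVy : ∀ x y : ℝ, HasDerivAt (fun s => V x s) (-Real.exp (W x y)) y := by
    intro x y
    have h := curve_snd _ hVd x y
    have : pdy V x y = fderiv ℝ (fun p : ℝ × ℝ => V p.1 p.2) (x, y) (0, 1) := h.deriv
    rw [h1] at this
    rw [← this] at h
    exact h
  have hWx : ∀ x y : ℝ, HasDerivAt (fun t => W t y) (-Real.exp (V x y)) x := by
    intro x y
    have h := curve_fst _ hWd x y
    have : pdx W x y = fderiv ℝ (fun p : ℝ × ℝ => W p.1 p.2) (x, y) (1, 0) := h.deriv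
    rw [h2] at this
    rw [← this] at h
    exact h
  have hWy : ∀ x y : ℝ, HasDerivAt (fun s => W x s) (pdy W x y) y := by
    intro x y
    have h := curve_snd _ hWd x y
    have : pdy W x y = fderiv ℝ (fun p : ℝ × ℝ => W p.1 p.2) (x, y) (0, 1) := h.deriv
    rw [this]; exact h
  have hVx : ∀ x y : ℝ, HasDerivAt (fun t => V t y) (pdx V x y) x := by
    intro x y
    have h := curve_fst _ hVd x y
    have : pdx V x y = fderiv ℝ (fun p : ℝ × ℝ => V p.1 p.2) (x, y) (1, 0) := h.deriv
    rw [this]; exact h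
  -- mixed partial of W: ∂ₓ (pdy W) = e^{W+V}
  have hClair : ∀ x y : ℝ, HasDerivAt (fun t => pdy W t y)
      (Real.exp (W x y) * Real.exp (V x y)) x := by
    intro x y
    have h := clairaut (fun p : ℝ × ℝ => W p.1 p.2) hW x y
    have heq : (fun s => fderiv ℝ (fun p : ℝ × ℝ => W p.1 p.2) (x, s) ((1 : ℝ), (0 : ℝ)))
        = fun s => -Real.exp (V x s) := by
      funext s
      rw [← (curve_fst _ hWd x s).deriv]
      exact h2 x s
    rw [heq] at h
    have h' : HasDerivAt (fun s => -Real.exp (V x s))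
        (Real.exp (W x y) * Real.exp (V x y)) y := by
      have := ((hVy x y).exp).neg
      refine this.congr_deriv ?_
      ring
    rw [h'.deriv] at h
    simpa [pdy] using h
  -- formula for pdy u₃
  have hA : ∀ x y : ℝ, HasDerivAt (fun s => u₃ x s)
      (Real.exp (W x y - V x y) * (y * (pdy W x y + Real.exp (W x y)))) y := by
    intro x y
    rw [hu₃]
    have hd := (((hasDerivAt_id y).mul (((hWy x y).sub (hVy x y)).exp)).sub
        (((hVy x y).neg).exp)).add_const x
    refine hd.congr_deriv ?_
    have e3 : Real.exp (-V x y) * Real.exp (W x y) = Real.exp (W x y - V x y) := by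
      rw [← Real.exp_add]; ring_nf
    simp only [id_eq, Pi.sub_apply, Pi.neg_apply]
    linear_combination -e3
  have hAf : ∀ x y : ℝ, pdy u₃ x y
      = Real.exp (W x y - V x y) * (y * (pdy W x y + Real.exp (W x y))) := fun x y =>
    (hA x y).deriv
  -- formula for pdx u₃
  have hB : ∀ x y : ℝ, HasDerivAt (fun t => u₃ t y)
      ((-Real.exp (V x y) - pdx V x y) * (u₃ x y - x)) x := by
    intro x y
    simp only [hu₃]
    have hd := ((((((hWx x y).sub (hVx x y)).exp).const_mul y)).sub
        (((hVx x y).neg).exp)).add (hasDerivAt_id x)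
    refine hd.congr_deriv ?_
    have e2 : Real.exp (-V x y) * Real.exp (V x y) = 1 := by
      rw [← Real.exp_add]; simp
    simp only [Pi.sub_apply, Pi.neg_apply]
    linear_combination -e2
  have hBform : ∀ x y : ℝ, pdx u₃ x y
      = (-Real.exp (V x y) - pdx V x y) * (u₃ x y - x) := fun x y => (hB x y).deriv
  -- mixed partial of u₃
  intro x y hne
  have hmix : pdx (pdy u₃) x y
      = (-Real.exp (V x y) - pdx V x y) * pdy u₃ x y := by
    have heq : (fun t => pdy u₃ t y)
        = fun t => Real.exp (W t y - V t y) * (y * (pdy W t y + Real.exp (W t y))) :=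
      funext fun t => hAf t y
    have hd : HasDerivAt
        (fun t => Real.exp (W t y - V t y) * (y * (pdy W t y + Real.exp (W t y))))
        (Real.exp (W x y - V x y) * (-Real.exp (V x y) - pdx V x y) *
            (y * (pdy W x y + Real.exp (W x y))) +
          Real.exp (W x y - V x y) *
            (y * (Real.exp (W x y) * Real.exp (V x y) +
              Real.exp (W x y) * -Real.exp (V x y)))) x := by
      exact ((((hWx x y).sub (hVx x y)).exp).mul
        (((hClair x y).add ((hWx x y).exp)).const_mul y))
    have hpd : pdx (pdy u₃) x y =
        Real.exp (W x y - V x y) * (-Real.exp (V x y) - pdx V x y) *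
            (y * (pdy W x y + Real.exp (W x y))) +
          Real.exp (W x y - V x y) *
            (y * (Real.exp (W x y) * Real.exp (V x y) +
              Real.exp (W x y) * -Real.exp (V x y))) := by
      show deriv (fun t => pdy u₃ t y) x = _
      rw [heq]; exact hd.deriv
    rw [hpd, hAf x y]
    ring
  rw [hmix, hBform x y]
  have hne' : u₃ x y - x ≠ 0 := sub_ne_zero.mpr hne
  field_simp
end
end

section
/- Let V, W : ℝ² → ℝ be smooth functions satisfying V_y = −e^W and W_x = −e^V at every point (x, y) ∈ ℝ². Define u₄(x, y) := (y·e^W + x·e^V − 1)/(e^W + e^V). Then at every point where u₄ ≠ x and u₄ ≠ y, the function u₄ satisfies the equation ∂_x∂_y u₄ = ((2u₄ − x − y)/((u₄ − x)(u₄ − y))) · (∂_x u₄)(∂_y u₄). -/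
noncomputable section

open Real

lemma diff_fst (F : ℝ → ℝ → ℝ)
    (hF : ContDiff ℝ (⊤ : ℕ∞) (fun p : ℝ × ℝ => F p.1 p.2)) (x y : ℝ) :
    DifferentiableAt ℝ (fun t => F t y) x :=
  ((hF.differentiable (by simp)) (x, y)).comp (f := fun t => (t, y)) x
    (differentiableAt_id.prodMk (differentiableAt_const y))

lemma diff_snd (F : ℝ → ℝ → ℝ)
    (hF : ContDiff ℝ (⊤ : ℕ∞) (fun p : ℝ × ℝ => F p.1 p.2)) (x y : ℝ) :
    DifferentiableAt ℝ (fun t => F x t) y :=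
  ((hF.differentiable (by simp)) (x, y)).comp y
    ((differentiableAt_const x).prodMk differentiableAt_id)

lemma pdy_eq_fderiv (F : ℝ → ℝ → ℝ)
    (hF : ContDiff ℝ (⊤ : ℕ∞) (fun p : ℝ × ℝ => F p.1 p.2)) (x y : ℝ) :
    pdy F x y = fderiv ℝ (fun p : ℝ × ℝ => F p.1 p.2) (x, y) (0, 1) := by
  have h := (((hF.differentiable (by simp)) (x, y)).hasFDerivAt).comp_hasDerivAt y
    ((hasDerivAt_const y x).prodMk (hasDerivAt_id y))
  exact h.deriv

lemma pdx_eq_fderiv (F : ℝ → ℝ → ℝ)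
    (hF : ContDiff ℝ (⊤ : ℕ∞) (fun p : ℝ × ℝ => F p.1 p.2)) (x y : ℝ) :
    pdx F x y = fderiv ℝ (fun p : ℝ × ℝ => F p.1 p.2) (x, y) (1, 0) := by
  have h := (((hF.differentiable (by simp)) (x, y)).hasFDerivAt).comp_hasDerivAt x
    ((hasDerivAt_id x).prodMk (hasDerivAt_const x y))
  exact h.deriv

lemma hasDerivAt_pdy_slice (F : ℝ → ℝ → ℝ)
    (hF : ContDiff ℝ (⊤ : ℕ∞) (fun p : ℝ × ℝ => F p.1 p.2)) (x y : ℝ) :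
    HasDerivAt (fun t => pdy F t y) (pdy (pdx F) x y) x := by
  set F' : ℝ × ℝ → ℝ := fun p => F p.1 p.2 with hF'
  have hG : ContDiff ℝ (⊤ : ℕ∞) (fderiv ℝ F') := hF.fderiv_right (by simp)
  have hGd := ((hG.differentiable (by simp)) (x, y)).hasFDerivAt
  have hA : HasDerivAt (fun t => fderiv ℝ F' (t, y)) (fderiv ℝ (fderiv ℝ F') (x, y) (1, 0)) x :=
    hGd.comp_hasDerivAt x ((hasDerivAt_id x).prodMk (hasDerivAt_const x y))
  have hA2 : HasDerivAt (fun t => fderiv ℝ F' (t, y) (0, 1))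
      (fderiv ℝ (fderiv ℝ F') (x, y) (1, 0) (0, 1)) x := by
    simpa using hA.clm_apply (hasDerivAt_const x ((0 : ℝ), (1 : ℝ)))
  have hB : HasDerivAt (fun t => fderiv ℝ F' (x, t)) (fderiv ℝ (fderiv ℝ F') (x, y) (0, 1)) y :=
    hGd.comp_hasDerivAt y ((hasDerivAt_const y x).prodMk (hasDerivAt_id y))
  have hB2 : HasDerivAt (fun t => fderiv ℝ F' (x, t) (1, 0))
      (fderiv ℝ (fderiv ℝ F') (x, y) (0, 1) (1, 0)) y := by
    simpa using hB.clm_apply (hasDerivAt_const y ((1 : ℝ), (0 : ℝ)))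
  have hsym : fderiv ℝ (fderiv ℝ F') (x, y) (1, 0) (0, 1)
      = fderiv ℝ (fderiv ℝ F') (x, y) (0, 1) (1, 0) :=
    (hF.contDiffAt.isSymmSndFDerivAt (by rw [minSmoothness_of_isRCLikeNormedField]; exact WithTop.coe_le_coe.mpr le_top)) _ _
  have hfun : (fun t => pdy F t y) = fun t => fderiv ℝ F' (t, y) (0, 1) :=
    funext fun t => pdy_eq_fderiv F hF t y
  have hval : pdy (pdx F) x y = fderiv ℝ (fderiv ℝ F') (x, y) (0, 1) (1, 0) := by
    have hfun2 : (fun t => pdx F x t) = fun t => fderiv ℝ F' (x, t) (1, 0) :=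
      funext fun t => pdx_eq_fderiv F hF x t
    show deriv (fun t => pdx F x t) y = _
    rw [hfun2]; exact hB2.deriv
  rw [hfun, hval, ← hsym]
  exact hA2


/-- If smooth `V, W` satisfy the Bäcklund system `V_y = −e^W`, `W_x = −e^V`, then
`u₄ = (y·e^W + x·e^V − 1)/(e^W + e^V)` satisfies
`u₄ₓᵧ = ((2u₄ − x − y)/((u₄ − x)(u₄ − y))) u₄ₓ u₄ᵧ` wherever `u₄ ≠ x` and `u₄ ≠ y`. -/
theorem backlund_system_u4 (V W : ℝ → ℝ → ℝ)
    (hV : ContDiff ℝ (⊤ : ℕ∞) (fun p : ℝ × ℝ => V p.1 p.2))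
    (hW : ContDiff ℝ (⊤ : ℕ∞) (fun p : ℝ × ℝ => W p.1 p.2))
    (h1 : ∀ x y : ℝ, pdy V x y = -Real.exp (W x y))
    (h2 : ∀ x y : ℝ, pdx W x y = -Real.exp (V x y))
    (u₄ : ℝ → ℝ → ℝ)
    (hu₄ : u₄ = fun x y =>
      (y * Real.exp (W x y) + x * Real.exp (V x y) - 1) / (Real.exp (W x y) + Real.exp (V x y))) :
    ∀ x y : ℝ, u₄ x y ≠ x → u₄ x y ≠ y →
      pdx (pdy u₄) x y
        = ((2 * u₄ x y - x - y) / ((u₄ x y - x) * (u₄ x y - y))) * (pdx u₄ x y * pdy u₄ x y) := by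
  -- the first-variable partial of `pdy W` equals `e^V e^W` (Clairaut + the system)
  have hclair : ∀ x y : ℝ, pdy (pdx W) x y = Real.exp (V x y) * Real.exp (W x y) := by
    intro x y
    have h : HasDerivAt (fun t => -Real.exp (V x t)) (-(Real.exp (V x y) * pdy V x y)) y :=
      ((diff_snd V hV x y).hasDerivAt.exp).neg
    have h0 : pdy (pdx W) x y = deriv (fun t => pdx W x t) y := rfl
    rw [h0, funext fun t => h2 x t, h.deriv, h1 x y]; ring
  -- global formula for `pdy u₄`
  have hpdyu : ∀ X Y : ℝ, pdy u₄ X Y =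
      ((1 * Real.exp (W X Y) + Y * (Real.exp (W X Y) * pdy W X Y)
          + X * (Real.exp (V X Y) * -Real.exp (W X Y)))
        * (Real.exp (W X Y) + Real.exp (V X Y))
        - (Y * Real.exp (W X Y) + X * Real.exp (V X Y) - 1)
          * (Real.exp (W X Y) * pdy W X Y + Real.exp (V X Y) * -Real.exp (W X Y)))
      / (Real.exp (W X Y) + Real.exp (V X Y)) ^ 2 := by
    intro X Y
    have ha : HasDerivAt (fun t => Real.exp (V X t)) (Real.exp (V X Y) * pdy V X Y) Y :=
      (diff_snd V hV X Y).hasDerivAt.exp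
    have hb : HasDerivAt (fun t => Real.exp (W X t)) (Real.exp (W X Y) * pdy W X Y) Y :=
      (diff_snd W hW X Y).hasDerivAt.exp
    have hN : HasDerivAt (fun t => t * Real.exp (W X t) + X * Real.exp (V X t) - 1)
        (1 * Real.exp (W X Y) + Y * (Real.exp (W X Y) * pdy W X Y)
          + X * (Real.exp (V X Y) * pdy V X Y)) Y :=
      (((hasDerivAt_id Y).mul hb).add (ha.const_mul X)).sub_const 1
    have hS : HasDerivAt (fun t => Real.exp (W X t) + Real.exp (V X t))
        (Real.exp (W X Y) * pdy W X Y + Real.exp (V X Y) * pdy V X Y) Y := hb.add ha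
    have hSne : Real.exp (W X Y) + Real.exp (V X Y) ≠ 0 := by positivity
    have hval : pdy u₄ X Y =
        ((1 * Real.exp (W X Y) + Y * (Real.exp (W X Y) * pdy W X Y)
            + X * (Real.exp (V X Y) * pdy V X Y))
          * (Real.exp (W X Y) + Real.exp (V X Y))
          - (Y * Real.exp (W X Y) + X * Real.exp (V X Y) - 1)
            * (Real.exp (W X Y) * pdy W X Y + Real.exp (V X Y) * pdy V X Y))
        / (Real.exp (W X Y) + Real.exp (V X Y)) ^ 2 := by
      rw [hu₄]; exact (hN.div hS hSne).deriv
    rw [hval, h1 X Y]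
  intro x y hx hy
  have hSne : Real.exp (W x y) + Real.exp (V x y) ≠ 0 := by positivity
  -- first-variable derivatives at (x, y)
  have hA1 : HasDerivAt (fun t => Real.exp (V t y)) (Real.exp (V x y) * pdx V x y) x :=
    (diff_fst V hV x y).hasDerivAt.exp
  have hB1 : HasDerivAt (fun t => Real.exp (W t y)) (Real.exp (W x y) * pdx W x y) x :=
    (diff_fst W hW x y).hasDerivAt.exp
  have hQ1 : HasDerivAt (fun t => pdy W t y) (pdy (pdx W) x y) x :=
    hasDerivAt_pdy_slice W hW x y
  have hS1 : HasDerivAt (fun t => Real.exp (W t y) + Real.exp (V t y))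
      (Real.exp (W x y) * pdx W x y + Real.exp (V x y) * pdx V x y) x := hB1.add hA1
  -- formula for `pdx u₄` at (x, y)
  have hpdxu : pdx u₄ x y =
      ((y * (Real.exp (W x y) * pdx W x y)
          + (1 * Real.exp (V x y) + x * (Real.exp (V x y) * pdx V x y)))
        * (Real.exp (W x y) + Real.exp (V x y))
        - (y * Real.exp (W x y) + x * Real.exp (V x y) - 1)
          * (Real.exp (W x y) * pdx W x y + Real.exp (V x y) * pdx V x y))
      / (Real.exp (W x y) + Real.exp (V x y)) ^ 2 := by
    have hNx : HasDerivAt (fun t => y * Real.exp (W t y) + t * Real.exp (V t y) - 1)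
        (y * (Real.exp (W x y) * pdx W x y)
          + (1 * Real.exp (V x y) + x * (Real.exp (V x y) * pdx V x y))) x :=
      ((hB1.const_mul y).add ((hasDerivAt_id x).mul hA1)).sub_const 1
    rw [hu₄]; exact (hNx.div hS1 hSne).deriv
  -- second mixed derivative
  have t1 : HasDerivAt (fun t => 1 * Real.exp (W t y)) (1 * (Real.exp (W x y) * pdx W x y)) x :=
    hB1.const_mul 1
  have t2 : HasDerivAt (fun t => y * (Real.exp (W t y) * pdy W t y))
      (y * ((Real.exp (W x y) * pdx W x y) * pdy W x y
        + Real.exp (W x y) * pdy (pdx W) x y)) x := (hB1.mul hQ1).const_mul y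
  have t3 : HasDerivAt (fun t => t * (Real.exp (V t y) * -Real.exp (W t y)))
      (1 * (Real.exp (V x y) * -Real.exp (W x y))
        + x * ((Real.exp (V x y) * pdx V x y) * -Real.exp (W x y)
          + Real.exp (V x y) * -(Real.exp (W x y) * pdx W x y))) x :=
    (hasDerivAt_id x).mul (hA1.mul hB1.neg)
  have hNf : HasDerivAt (fun t => y * Real.exp (W t y) + t * Real.exp (V t y) - 1)
      (y * (Real.exp (W x y) * pdx W x y)
        + (1 * Real.exp (V x y) + x * (Real.exp (V x y) * pdx V x y))) x :=
    ((hB1.const_mul y).add ((hasDerivAt_id x).mul hA1)).sub_const 1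
  have hR : HasDerivAt (fun t => Real.exp (W t y) * pdy W t y + Real.exp (V t y) * -Real.exp (W t y))
      ((Real.exp (W x y) * pdx W x y) * pdy W x y + Real.exp (W x y) * pdy (pdx W) x y
        + ((Real.exp (V x y) * pdx V x y) * -Real.exp (W x y)
          + Real.exp (V x y) * -(Real.exp (W x y) * pdx W x y))) x :=
    (hB1.mul hQ1).add (hA1.mul hB1.neg)
  have hden : HasDerivAt (fun t => (Real.exp (W t y) + Real.exp (V t y)) ^ 2) _ x := hS1.pow 2
  have hdenne : (Real.exp (W x y) + Real.exp (V x y)) ^ 2 ≠ 0 := by positivity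
  have hD : HasDerivAt (fun t =>
      ((1 * Real.exp (W t y) + y * (Real.exp (W t y) * pdy W t y)
          + t * (Real.exp (V t y) * -Real.exp (W t y)))
        * (Real.exp (W t y) + Real.exp (V t y))
        - (y * Real.exp (W t y) + t * Real.exp (V t y) - 1)
          * (Real.exp (W t y) * pdy W t y + Real.exp (V t y) * -Real.exp (W t y)))
      / (Real.exp (W t y) + Real.exp (V t y)) ^ 2) _ x :=
    ((((t1.add t2).add t3).mul hS1).sub (hNf.mul hR)).div hden hdenne
  have hgoal : pdx (pdy u₄) x y = deriv (fun t => pdy u₄ t y) x := rfl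
  -- algebraic preliminaries
  have hu : u₄ x y = (y * Real.exp (W x y) + x * Real.exp (V x y) - 1)
      / (Real.exp (W x y) + Real.exp (V x y)) := by rw [hu₄]
  have e1 : u₄ x y - x = ((y - x) * Real.exp (W x y) - 1)
      / (Real.exp (W x y) + Real.exp (V x y)) := by
    rw [hu]; field_simp; ring
  have e2 : u₄ x y - y = ((x - y) * Real.exp (V x y) - 1)
      / (Real.exp (W x y) + Real.exp (V x y)) := by
    rw [hu]; field_simp; ring
  have hP : (y - x) * Real.exp (W x y) - 1 ≠ 0 := by
    intro h0
    apply hx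
    have : u₄ x y - x = 0 := by rw [e1, h0, zero_div]
    linarith
  have hQ : (x - y) * Real.exp (V x y) - 1 ≠ 0 := by
    intro h0
    apply hy
    have : u₄ x y - y = 0 := by rw [e2, h0, zero_div]
    linarith
  rw [hgoal, funext fun t => hpdyu t y, hD.deriv, hpdxu, hpdyu x y, e1, e2, hu,
    hclair x y, h2 x y]
  simp only [Pi.add_apply, Pi.mul_apply, Pi.sub_apply]
  have hP' : Real.exp (W x y) * (y - x) - 1 ≠ 0 := by rwa [mul_comm]
  have hQ' : Real.exp (V x y) * (x - y) - 1 ≠ 0 := by rwa [mul_comm]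
  field_simp
  ring
end
end

section
/- Let f, g : ℝ → ℝ be smooth functions with f′(x) ≠ 0 for all x, and define u(x, y) := (y g′(y) − f(x) − g(y))/f′(x) + x. Then at every point (x, y) where y g′(y) − f(x) − g(y) ≠ 0 (equivalently u ≠ x), the function u satisfies ∂_x∂_y u = (∂_x u)(∂_y u)/(u − x). -/
noncomputable section

open Real

/-- Solution formula from the joint differential invariant `(y wᵧ − v − w)/vₓ + x`:
for smooth `f, g` with `f′ ≠ 0`, `u = (y g′(y) − f(x) − g(y))/f′(x) + x` satisfies
`uₓᵧ = uₓuᵧ/(u − x)` wherever `y g′(y) − f(x) − g(y) ≠ 0`. -/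
theorem u3_solution_formula (f g : ℝ → ℝ)
    (hf : ContDiff ℝ (⊤ : ℕ∞) f) (hg : ContDiff ℝ (⊤ : ℕ∞) g)
    (hf' : ∀ x : ℝ, deriv f x ≠ 0)
    (u : ℝ → ℝ → ℝ)
    (hu : u = fun x y => (y * deriv g y - f x - g y) / deriv f x + x) :
    ∀ x y : ℝ, y * deriv g y - f x - g y ≠ 0 →
      pdx (pdy u) x y = pdx u x y * pdy u x y / (u x y - x) := by
  subst hu
  have hf1 : Differentiable ℝ f := hf.differentiable (by simp)
  have hf2 := (contDiff_infty_iff_deriv.mp (hf.of_le (by simp))).2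
  have hf2' : Differentiable ℝ (deriv f) := hf2.differentiable (by norm_num)
  have hg1 : Differentiable ℝ g := hg.differentiable (by simp)
  have hg2 := (contDiff_infty_iff_deriv.mp (hg.of_le (by simp))).2
  have hg2' : Differentiable ℝ (deriv g) := hg2.differentiable (by norm_num)
  have hpdy : ∀ x y : ℝ,
      pdy (fun x y => (y * deriv g y - f x - g y) / deriv f x + x) x y
        = y * deriv (deriv g) y / deriv f x := by
    intro x y
    have h1 : HasDerivAt (fun t : ℝ => t * deriv g t - f x - g t)
        (1 * deriv g y + y * deriv (deriv g) y - deriv g y) y := by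
      have h := ((hasDerivAt_id y).mul ((hg2' y).hasDerivAt)).sub_const (f x)
      exact h.sub ((hg1 y).hasDerivAt)
    have h2 : HasDerivAt
        (fun t : ℝ => (t * deriv g t - f x - g t) / deriv f x + x)
        ((1 * deriv g y + y * deriv (deriv g) y - deriv g y) / deriv f x) y :=
      (h1.div_const _).add_const x
    rw [pdy, h2.deriv]
    ring
  intro x y hxy
  have hfx := hf' x
  have hpdxy : pdx (pdy (fun x y => (y * deriv g y - f x - g y) / deriv f x + x)) x y
      = (0 * deriv f x - y * deriv (deriv g) y * deriv (deriv f) x) / (deriv f x) ^ 2 := by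
    have hA : HasDerivAt (fun t : ℝ => y * deriv (deriv g) y / deriv f t)
        ((0 * deriv f x - y * deriv (deriv g) y * deriv (deriv f) x) / (deriv f x) ^ 2) x :=
      (hasDerivAt_const x _).div ((hf2' x).hasDerivAt) hfx
    rw [pdx]
    have hfun : (fun t => pdy (fun x y => (y * deriv g y - f x - g y) / deriv f x + x) t y)
        = fun t => y * deriv (deriv g) y / deriv f t := funext fun t => hpdy t y
    rw [hfun, hA.deriv]
  have hnum : HasDerivAt (fun t : ℝ => y * deriv g y - f t - g y)
      (0 - deriv f x) x :=
    ((hasDerivAt_const x (y * deriv g y)).sub ((hf1 x).hasDerivAt)).sub_const (g y)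
  have hB : HasDerivAt (fun t : ℝ => (y * deriv g y - f t - g y) / deriv f t + t)
      (((0 - deriv f x) * deriv f x
          - (y * deriv g y - f x - g y) * deriv (deriv f) x) / (deriv f x) ^ 2 + 1) x := by
    have h := (hnum.div ((hf2' x).hasDerivAt) hfx).add (hasDerivAt_id x)
    exact h
  have hpdx : pdx (fun x y => (y * deriv g y - f x - g y) / deriv f x + x) x y
      = ((0 - deriv f x) * deriv f x
          - (y * deriv g y - f x - g y) * deriv (deriv f) x) / (deriv f x) ^ 2 + 1 := by
    rw [pdx, hB.deriv]
  rw [hpdxy, hpdx, hpdy]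
  have hux : ((y * deriv g y - f x - g y) / deriv f x + x) - x
      = (y * deriv g y - f x - g y) / deriv f x := by ring
  simp only []
  rw [hux]
  have hne : (y * deriv g y - f x - g y) / deriv f x ≠ 0 := div_ne_zero hxy hfx
  field_simp
  ring
end
end

section
/- Let f, g : ℝ → ℝ be smooth functions and let D ⊆ ℝ² be an open set on which f′(x) + g′(y) ≠ 0. Define u(x, y) := (x f′(x) + y g′(y) − f(x) − g(y))/(f′(x) + g′(y)). Then at every point of D where u ≠ x and u ≠ y, the function u satisfies ∂_x∂_y u = ((2u − x − y)/((u − x)(u − y))) · (∂_x u)(∂_y u). -/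
noncomputable section

open Real

set_option maxHeartbeats 2000000 in
/-- Solution formula from the joint differential invariant `(x vₓ + y wᵧ − v − w)/(vₓ + wᵧ)`:
for smooth `f, g` with `f′(x) + g′(y) ≠ 0` on an open set `D`,
`u = (x f′(x) + y g′(y) − f(x) − g(y))/(f′(x) + g′(y))` satisfies
`uₓᵧ = ((2u − x − y)/((u − x)(u − y))) uₓuᵧ` at points of `D` where `u ≠ x` and `u ≠ y`. -/
theorem u4_solution_formula (f g : ℝ → ℝ)
    (hf : ContDiff ℝ (⊤ : ℕ∞) f) (hg : ContDiff ℝ (⊤ : ℕ∞) g)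
    (D : Set (ℝ × ℝ)) (hD : IsOpen D)
    (hden : ∀ p ∈ D, deriv f p.1 + deriv g p.2 ≠ 0)
    (u : ℝ → ℝ → ℝ)
    (hu : u = fun x y =>
      (x * deriv f x + y * deriv g y - f x - g y) / (deriv f x + deriv g y)) :
    ∀ p ∈ D, u p.1 p.2 ≠ p.1 → u p.1 p.2 ≠ p.2 →
      pdx (pdy u) p.1 p.2
        = ((2 * u p.1 p.2 - p.1 - p.2) / ((u p.1 p.2 - p.1) * (u p.1 p.2 - p.2)))
            * (pdx u p.1 p.2 * pdy u p.1 p.2) := by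
  have hf1 : ContDiff ℝ (⊤ : ℕ∞) (deriv f) := (contDiff_infty_iff_deriv.mp (hf.of_le (by simp))).2
  have hg1 : ContDiff ℝ (⊤ : ℕ∞) (deriv g) := (contDiff_infty_iff_deriv.mp (hg.of_le (by simp))).2
  have hfd : Differentiable ℝ f := hf.differentiable (by simp)
  have hgd : Differentiable ℝ g := hg.differentiable (by simp)
  have hf1d : Differentiable ℝ (deriv f) := hf1.differentiable (by simp)
  have hg1d : Differentiable ℝ (deriv g) := hg1.differentiable (by simp)
  have hpdy : ∀ x y : ℝ, deriv f x + deriv g y ≠ 0 →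
      pdy u x y = deriv (deriv g) y * ((y - x) * deriv f x + f x + g y)
        / (deriv f x + deriv g y) ^ 2 := by
    intro x y h
    have h1 : HasDerivAt (fun t => t * deriv g t)
        (1 * deriv g y + y * deriv (deriv g) y) y :=
      (hasDerivAt_id y).mul (hg1d y).hasDerivAt
    have hN : HasDerivAt (fun t => x * deriv f x + t * deriv g t - f x - g t)
        (0 + (1 * deriv g y + y * deriv (deriv g) y) - 0 - deriv g y) y :=
      (((hasDerivAt_const y (x * deriv f x)).add h1).sub
        (hasDerivAt_const y (f x))).sub (hgd y).hasDerivAt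
    have hDen : HasDerivAt (fun t => deriv f x + deriv g t)
        (0 + deriv (deriv g) y) y :=
      (hasDerivAt_const y (deriv f x)).add (hg1d y).hasDerivAt
    have hdiv := (hN.div hDen h).deriv
    simp only [Pi.div_def] at hdiv
    rw [hu]
    unfold pdy
    rw [hdiv]
    field_simp
    ring
  intro p hp hx hy
  obtain ⟨x, y⟩ := p
  simp only at hx hy ⊢
  have hxy : deriv f x + deriv g y ≠ 0 := hden (x, y) hp
  -- eventual equality near x
  have hopen : IsOpen {t : ℝ | (t, y) ∈ D} :=
    hD.preimage (continuous_id.prodMk continuous_const)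
  have hev : (fun t => pdy u t y) =ᶠ[nhds x]
      (fun t => deriv (deriv g) y * ((y - t) * deriv f t + f t + g y)
        / (deriv f t + deriv g y) ^ 2) := by
    filter_upwards [hopen.mem_nhds (by exact hp)] with t ht
    exact hpdy t y (hden (t, y) ht)
  have hL : pdx (pdy u) x y = deriv (fun t => deriv (deriv g) y *
      ((y - t) * deriv f t + f t + g y) / (deriv f t + deriv g y) ^ 2) x := by
    unfold pdx
    exact hev.deriv_eq
  -- compute that derivative
  have hn : HasDerivAt (fun t => deriv (deriv g) y * ((y - t) * deriv f t + f t + g y))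
      (deriv (deriv g) y * (((0 - 1) * deriv f x + (y - x) * deriv (deriv f) x)
        + deriv f x + 0)) x := by
    have h2 : HasDerivAt (fun t => (y - t) * deriv f t)
        ((0 - 1) * deriv f x + (y - x) * deriv (deriv f) x) x :=
      ((hasDerivAt_const x y).sub (hasDerivAt_id x)).mul (hf1d x).hasDerivAt
    exact (((h2.add (hfd x).hasDerivAt).add (hasDerivAt_const x (g y))).const_mul
      (deriv (deriv g) y))
  have hd : HasDerivAt (fun t => (deriv f t + deriv g y) ^ 2)
      ((2 : ℕ) * (deriv f x + deriv g y) ^ 1 * deriv (deriv f) x) x := by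
    exact ((hf1d x).hasDerivAt.add_const (deriv g y)).pow 2
  have hdne : (deriv f x + deriv g y) ^ 2 ≠ 0 := pow_ne_zero 2 hxy
  have hderiv := (hn.div hd hdne).deriv
  simp only [Pi.div_def] at hderiv
  rw [hL, hderiv, hpdy x y hxy]
  have hpdx : pdx u x y = deriv (deriv f) x * ((x - y) * deriv g y + f x + g y)
      / (deriv f x + deriv g y) ^ 2 := by
    have h1 : HasDerivAt (fun t => t * deriv f t)
        (1 * deriv f x + x * deriv (deriv f) x) x :=
      (hasDerivAt_id x).mul (hf1d x).hasDerivAt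
    have hN : HasDerivAt (fun t => t * deriv f t + y * deriv g y - f t - g y)
        ((1 * deriv f x + x * deriv (deriv f) x) + 0 - deriv f x - 0) x :=
      ((h1.add (hasDerivAt_const x (y * deriv g y))).sub (hfd x).hasDerivAt).sub
        (hasDerivAt_const x (g y))
    have hDen : HasDerivAt (fun t => deriv f t + deriv g y)
        (deriv (deriv f) x + 0) x :=
      (hf1d x).hasDerivAt.add (hasDerivAt_const x (deriv g y))
    have hdiv := (hN.div hDen hxy).deriv
    simp only [Pi.div_def] at hdiv
    rw [hu]
    unfold pdx
    rw [hdiv]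
    field_simp
    ring
  rw [hpdx]
  rw [hu] at hx hy ⊢
  simp only at hx hy ⊢
  have hx2 : x * deriv f x + y * deriv g y - f x - g y - (deriv f x + deriv g y) * x ≠ 0 := by
    intro h0
    apply hx
    rw [div_eq_iff hxy]
    linarith
  have hy2 : x * deriv f x + y * deriv g y - f x - g y - (deriv f x + deriv g y) * y ≠ 0 := by
    intro h0
    apply hy
    rw [div_eq_iff hxy]
    linarith
  rw [div_sub' hxy, div_sub' hxy]
  field_simp [hx2, hy2]
  rw [eq_div_iff (mul_ne_zero (by contrapose! hx2; linarith) (by contrapose! hy2; linarith))]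
  ring
end
end

section
/- Let D ⊆ ℝ² be open and let u : D → ℝ be a smooth solution of ∂_x∂_y u = ((2u − x − y)/((u − x)(u − y))) · u_x u_y such that u ≠ x, u ≠ y, and u_x ≠ 0 on D. Then the function u_{xx}/u_x + (1 − 2u_x)/(u − x) is an intermediate integral: ∂_y( u_{xx}/u_x + (1 − 2u_x)/(u − x) ) = 0 on D. -/
noncomputable section

open Real

namespace U4Aux

/-- Slice derivative in the x-direction. -/
lemma hasDerivAt_slice_x {f : ℝ × ℝ → ℝ} {a b : ℝ} (hf : DifferentiableAt ℝ f (a, b)) :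
    HasDerivAt (fun t => f (t, b)) (fderiv ℝ f (a, b) (1, 0)) a := by
  have h1 : HasDerivAt (fun t : ℝ => (t, b)) ((1 : ℝ), (0 : ℝ)) a :=
    HasDerivAt.prodMk (hasDerivAt_id a) (hasDerivAt_const a b)
  exact hf.hasFDerivAt.comp_hasDerivAt a h1

/-- Slice derivative in the y-direction. -/
lemma hasDerivAt_slice_y {f : ℝ × ℝ → ℝ} {a b : ℝ} (hf : DifferentiableAt ℝ f (a, b)) :
    HasDerivAt (fun t => f (a, t)) (fderiv ℝ f (a, b) (0, 1)) b := by
  have h1 : HasDerivAt (fun t : ℝ => (a, t)) ((0 : ℝ), (1 : ℝ)) b :=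
    HasDerivAt.prodMk (hasDerivAt_const b a) (hasDerivAt_id b)
  exact hf.hasFDerivAt.comp_hasDerivAt b h1

/-- Symmetry of second partial derivatives for smooth functions on open sets. -/
lemma symm_fderiv {D : Set (ℝ × ℝ)} (hD : IsOpen D) {f : ℝ × ℝ → ℝ}
    (hf : ContDiffOn ℝ (⊤ : ℕ∞) f D) {p : ℝ × ℝ} (hp : p ∈ D) (w₁ w₂ : ℝ × ℝ) :
    fderiv ℝ (fun q => fderiv ℝ f q w₁) p w₂ = fderiv ℝ (fun q => fderiv ℝ f q w₂) p w₁ := by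
  have hd1 : ∀ᶠ q in nhds p, HasFDerivAt f (fderiv ℝ f q) q := by
    filter_upwards [hD.mem_nhds hp] with q hq
    exact ((hf.differentiableOn (by simp)).differentiableAt (hD.mem_nhds hq)).hasFDerivAt
  have hf' : ContDiffOn ℝ (⊤ : ℕ∞) (fun q => fderiv ℝ f q) D := hf.fderiv_of_isOpen hD (by simp)
  have hd2 : HasFDerivAt (fderiv ℝ f) (fderiv ℝ (fderiv ℝ f) p) p :=
    ((hf'.differentiableOn (by simp)).differentiableAt (hD.mem_nhds hp)).hasFDerivAt
  have key := second_derivative_symmetric_of_eventually hd1 hd2 w₁ w₂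
  have e1 : ∀ w : ℝ × ℝ, HasFDerivAt (fun q => fderiv ℝ f q w)
      ((ContinuousLinearMap.apply ℝ ℝ w).comp (fderiv ℝ (fderiv ℝ f) p)) p :=
    fun w => (ContinuousLinearMap.apply ℝ ℝ w).hasFDerivAt.comp p hd2
  rw [(e1 w₁).fderiv, (e1 w₂).fderiv]
  simpa using key.symm

/-- The full function on the plane. -/
def V (u : ℝ → ℝ → ℝ) : ℝ × ℝ → ℝ := fun p => u p.1 p.2

/-- x-partial as a function on the plane. -/
def Vx (u : ℝ → ℝ → ℝ) : ℝ × ℝ → ℝ := fun q => fderiv ℝ (V u) q (1, 0)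

/-- y-partial as a function on the plane. -/
def Vy (u : ℝ → ℝ → ℝ) : ℝ × ℝ → ℝ := fun q => fderiv ℝ (V u) q (0, 1)

/-- xx-partial as a function on the plane. -/
def Vxx (u : ℝ → ℝ → ℝ) : ℝ × ℝ → ℝ := fun q => fderiv ℝ (Vx u) q (1, 0)

/-- xy-partial as a function on the plane. -/
def Vxy (u : ℝ → ℝ → ℝ) : ℝ × ℝ → ℝ := fun q => fderiv ℝ (Vx u) q (0, 1)

variable {D : Set (ℝ × ℝ)} {u : ℝ → ℝ → ℝ}

lemma smooth_Vx (hD : IsOpen D) (hu : ContDiffOn ℝ (⊤ : ℕ∞) (V u) D) :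
    ContDiffOn ℝ (⊤ : ℕ∞) (Vx u) D :=
  (hu.fderiv_of_isOpen hD (by simp)).clm_apply contDiffOn_const

lemma smooth_Vy (hD : IsOpen D) (hu : ContDiffOn ℝ (⊤ : ℕ∞) (V u) D) :
    ContDiffOn ℝ (⊤ : ℕ∞) (Vy u) D :=
  (hu.fderiv_of_isOpen hD (by simp)).clm_apply contDiffOn_const

lemma smooth_Vxx (hD : IsOpen D) (hu : ContDiffOn ℝ (⊤ : ℕ∞) (V u) D) :
    ContDiffOn ℝ (⊤ : ℕ∞) (Vxx u) D :=
  ((smooth_Vx hD hu).fderiv_of_isOpen hD (by simp)).clm_apply contDiffOn_const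

lemma smooth_Vxy (hD : IsOpen D) (hu : ContDiffOn ℝ (⊤ : ℕ∞) (V u) D) :
    ContDiffOn ℝ (⊤ : ℕ∞) (Vxy u) D :=
  ((smooth_Vx hD hu).fderiv_of_isOpen hD (by simp)).clm_apply contDiffOn_const

lemma diffAt (hD : IsOpen D) {f : ℝ × ℝ → ℝ} (hf : ContDiffOn ℝ (⊤ : ℕ∞) f D) {q : ℝ × ℝ}
    (hq : q ∈ D) : DifferentiableAt ℝ f q :=
  (hf.differentiableOn (by simp)).differentiableAt (hD.mem_nhds hq)

lemma memx (hD : IsOpen D) {a b : ℝ} (h : (a, b) ∈ D) : ∀ᶠ t in nhds a, (t, b) ∈ D :=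
  (hD.preimage (continuous_id.prodMk continuous_const)).mem_nhds h

lemma memy (hD : IsOpen D) {a b : ℝ} (h : (a, b) ∈ D) : ∀ᶠ t in nhds b, (a, t) ∈ D :=
  (hD.preimage (continuous_const.prodMk continuous_id)).mem_nhds h

lemma pdx_eq (hD : IsOpen D) (hu : ContDiffOn ℝ (⊤ : ℕ∞) (V u) D) {c d : ℝ} (h : (c, d) ∈ D) :
    pdx u c d = Vx u (c, d) :=
  (hasDerivAt_slice_x (diffAt hD hu h)).deriv

lemma pdy_eq (hD : IsOpen D) (hu : ContDiffOn ℝ (⊤ : ℕ∞) (V u) D) {c d : ℝ} (h : (c, d) ∈ D) :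
    pdy u c d = Vy u (c, d) :=
  (hasDerivAt_slice_y (diffAt hD hu h)).deriv

lemma pdxx_eq (hD : IsOpen D) (hu : ContDiffOn ℝ (⊤ : ℕ∞) (V u) D) {c d : ℝ} (h : (c, d) ∈ D) :
    pdx (pdx u) c d = Vxx u (c, d) := by
  have he : (fun t => pdx u t d) =ᶠ[nhds c] (fun t => Vx u (t, d)) := by
    filter_upwards [memx hD h] with t ht
    exact pdx_eq hD hu ht
  show deriv (fun t => pdx u t d) c = Vxx u (c, d)
  rw [he.deriv_eq]
  exact (hasDerivAt_slice_x (diffAt hD (smooth_Vx hD hu) h)).deriv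

lemma pdxy_eq (hD : IsOpen D) (hu : ContDiffOn ℝ (⊤ : ℕ∞) (V u) D) {c d : ℝ} (h : (c, d) ∈ D) :
    pdx (pdy u) c d = fderiv ℝ (Vy u) (c, d) (1, 0) := by
  have he : (fun t => pdy u t d) =ᶠ[nhds c] (fun t => Vy u (t, d)) := by
    filter_upwards [memx hD h] with t ht
    exact pdy_eq hD hu ht
  show deriv (fun t => pdy u t d) c = fderiv ℝ (Vy u) (c, d) (1, 0)
  rw [he.deriv_eq]
  exact (hasDerivAt_slice_x (diffAt hD (smooth_Vy hD hu) h)).deriv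

lemma vxy_symm (hD : IsOpen D) (hu : ContDiffOn ℝ (⊤ : ℕ∞) (V u) D) {c d : ℝ} (h : (c, d) ∈ D) :
    Vxy u (c, d) = fderiv ℝ (Vy u) (c, d) (1, 0) :=
  symm_fderiv hD hu h (1, 0) (0, 1)

end U4Aux

open U4Aux in
/-- Intermediate integral for `uₓᵧ = ((2u − x − y)/((u − x)(u − y))) uₓuᵧ`:
for a smooth solution `u` on an open set `D` with `u ≠ x`, `u ≠ y` and `uₓ ≠ 0`,
`∂ᵧ(uₓₓ/uₓ + (1 − 2uₓ)/(u − x)) = 0` on `D`. -/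
theorem u4_intermediate_integral (D : Set (ℝ × ℝ)) (hD : IsOpen D)
    (u : ℝ → ℝ → ℝ)
    (hu : ContDiffOn ℝ (⊤ : ℕ∞) (fun p : ℝ × ℝ => u p.1 p.2) D)
    (hux : ∀ p ∈ D, pdx u p.1 p.2 ≠ 0)
    (hx : ∀ p ∈ D, u p.1 p.2 ≠ p.1) (hy : ∀ p ∈ D, u p.1 p.2 ≠ p.2)
    (heq : ∀ p ∈ D, pdx (pdy u) p.1 p.2
        = ((2 * u p.1 p.2 - p.1 - p.2) / ((u p.1 p.2 - p.1) * (u p.1 p.2 - p.2)))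
            * (pdx u p.1 p.2 * pdy u p.1 p.2)) :
    ∀ p ∈ D, pdy (fun x y =>
        pdx (pdx u) x y / pdx u x y + (1 - 2 * pdx u x y) / (u x y - x)) p.1 p.2 = 0 := by
  have hu' : ContDiffOn ℝ (⊤ : ℕ∞) (V u) D := hu
  -- pointwise value of `Vxy` from the PDE
  have hRval : ∀ c d : ℝ, (c, d) ∈ D → Vxy u (c, d)
      = ((2 * V u (c, d) - c - d) / ((V u (c, d) - c) * (V u (c, d) - d)))
          * (Vx u (c, d) * Vy u (c, d)) := by
    intro c d h
    have hpde := heq (c, d) h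
    simp only at hpde
    rw [vxy_symm hD hu' h, ← pdxy_eq hD hu' h, hpde, pdx_eq hD hu' h, pdy_eq hD hu' h]
    rfl
  rintro ⟨a, b⟩ hab
  simp only
  have huxne : Vx u (a, b) ≠ 0 := by
    have := hux (a, b) hab; rwa [pdx_eq hD hu' hab] at this
  have hP : V u (a, b) - a ≠ 0 := sub_ne_zero.mpr (hx (a, b) hab)
  have hQ : V u (a, b) - b ≠ 0 := sub_ne_zero.mpr (hy (a, b) hab)
  -- third mixed partial: value of `fderiv (Vxy u) (a,b) (1,0)`
  have hf0 : HasDerivAt (fun t => V u (t, b)) (Vx u (a, b)) a :=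
    hasDerivAt_slice_x (diffAt hD hu' hab)
  have hf1 : HasDerivAt (fun t => Vx u (t, b)) (Vxx u (a, b)) a :=
    hasDerivAt_slice_x (diffAt hD (smooth_Vx hD hu') hab)
  have hf2 : HasDerivAt (fun t => Vy u (t, b)) (Vxy u (a, b)) a := by
    rw [vxy_symm hD hu' hab]
    exact hasDerivAt_slice_x (diffAt hD (smooth_Vy hD hu') hab)
  have hN : HasDerivAt (fun t => 2 * V u (t, b) - t - b) (2 * Vx u (a, b) - 1 - 0) a :=
    (((hf0.const_mul 2).sub (hasDerivAt_id a)).sub (hasDerivAt_const a b))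
  have hDn : HasDerivAt (fun t => (V u (t, b) - t) * (V u (t, b) - b))
      ((Vx u (a, b) - 1) * (V u (a, b) - b) + (V u (a, b) - a) * (Vx u (a, b) - 0)) a :=
    ((hf0.sub (hasDerivAt_id a)).mul (hf0.sub (hasDerivAt_const a b)))
  have hRd := (hN.div hDn (mul_ne_zero hP hQ)).mul (hf1.mul hf2)
  have hxyev : (fun t => Vxy u (t, b)) =ᶠ[nhds a] (fun t =>
      ((2 * V u (t, b) - t - b) / ((V u (t, b) - t) * (V u (t, b) - b)))
        * (Vx u (t, b) * Vy u (t, b))) := by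
    filter_upwards [memx hD hab] with t ht
    exact hRval t b ht
  have huxxy : fderiv ℝ (Vxy u) (a, b) (1, 0)
      = ((2 * Vx u (a, b) - 1 - 0) * ((V u (a, b) - a) * (V u (a, b) - b))
          - (2 * V u (a, b) - a - b)
            * ((Vx u (a, b) - 1) * (V u (a, b) - b) + (V u (a, b) - a) * (Vx u (a, b) - 0)))
          / ((V u (a, b) - a) * (V u (a, b) - b)) ^ 2 * (Vx u (a, b) * Vy u (a, b))
        + (2 * V u (a, b) - a - b) / ((V u (a, b) - a) * (V u (a, b) - b))
          * (Vxx u (a, b) * Vy u (a, b) + Vx u (a, b) * Vxy u (a, b)) := by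
    have h1 : fderiv ℝ (Vxy u) (a, b) (1, 0) = deriv (fun t => Vxy u (t, b)) a :=
      ((hasDerivAt_slice_x (diffAt hD (smooth_Vxy hD hu') hab)).deriv).symm
    rw [h1, hxyev.deriv_eq]
    exact hRd.deriv
  -- assemble the slice in the y-direction
  have hg0 : HasDerivAt (fun t => V u (a, t)) (Vy u (a, b)) b :=
    hasDerivAt_slice_y (diffAt hD hu' hab)
  have hg1 : HasDerivAt (fun t => Vx u (a, t)) (Vxy u (a, b)) b :=
    hasDerivAt_slice_y (diffAt hD (smooth_Vx hD hu') hab)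
  have hg2 : HasDerivAt (fun t => Vxx u (a, t)) (fderiv ℝ (Vxy u) (a, b) (1, 0)) b := by
    have hs : fderiv ℝ (Vxx u) (a, b) (0, 1) = fderiv ℝ (Vxy u) (a, b) (1, 0) :=
      symm_fderiv hD (smooth_Vx hD hu') hab (1, 0) (0, 1)
    rw [← hs]
    exact hasDerivAt_slice_y (diffAt hD (smooth_Vxx hD hu') hab)
  have hG : HasDerivAt (fun t => Vxx u (a, t) / Vx u (a, t)
        + (1 - 2 * Vx u (a, t)) / (V u (a, t) - a))
      ((fderiv ℝ (Vxy u) (a, b) (1, 0) * Vx u (a, b) - Vxx u (a, b) * Vxy u (a, b))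
          / Vx u (a, b) ^ 2
        + ((0 - 2 * Vxy u (a, b)) * (V u (a, b) - a)
            - (1 - 2 * Vx u (a, b)) * (Vy u (a, b) - 0)) / (V u (a, b) - a) ^ 2) b :=
    (hg2.div hg1 huxne).add
      (((hasDerivAt_const b 1).sub (hg1.const_mul 2)).div
        (hg0.sub (hasDerivAt_const b a)) hP)
  have hFev : (fun t => pdx (pdx u) a t / pdx u a t + (1 - 2 * pdx u a t) / (u a t - a))
      =ᶠ[nhds b] (fun t => Vxx u (a, t) / Vx u (a, t)
        + (1 - 2 * Vx u (a, t)) / (V u (a, t) - a)) := by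
    filter_upwards [memy hD hab] with t ht
    rw [pdxx_eq hD hu' ht, pdx_eq hD hu' ht]
    rfl
  show deriv (fun t => pdx (pdx u) a t / pdx u a t + (1 - 2 * pdx u a t) / (u a t - a)) b = 0
  rw [hFev.deriv_eq, hG.deriv, huxxy, hRval a b hab]
  set U := V u (a, b)
  set ux := Vx u (a, b)
  set uy := Vy u (a, b)
  set uxx := Vxx u (a, b)
  field_simp
  ring
end
end

section
/- Let D ⊆ ℝ² be open and let u : D → ℝ be a smooth solution of ∂_x∂_y u = u_x u_y/(u − x) such that u ≠ x, u_x ≠ 0, u_y ≠ 0 and y ≠ 0 on D. Then the following three intermediate-integral identities hold on D: (i) ∂_y( u_x/(u − x) ) = 0; (ii) ∂_y( u_{xx}/u_x + (1 − 2u_x)/(u − x) ) = 0; (iii) ∂_x( u_{yy}/u_y − 1/y ) = 0. -/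
noncomputable section

open Real

private lemma sliceFst {E : Type*} [NormedAddCommGroup E] [NormedSpace ℝ E]
    {F : ℝ × ℝ → E} {L : ℝ × ℝ →L[ℝ] E} {x y : ℝ} (h : HasFDerivAt F L (x, y)) :
    HasDerivAt (fun t => F (t, y)) (L (1, 0)) x := by
  have := h.comp_hasDerivAt x ((hasDerivAt_id x).prodMk (hasDerivAt_const x y))
  exact this

private lemma sliceSnd {E : Type*} [NormedAddCommGroup E] [NormedSpace ℝ E]
    {F : ℝ × ℝ → E} {L : ℝ × ℝ →L[ℝ] E} {x y : ℝ} (h : HasFDerivAt F L (x, y)) :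
    HasDerivAt (fun t => F (x, t)) (L (0, 1)) y := by
  have := h.comp_hasDerivAt y ((hasDerivAt_const y x).prodMk (hasDerivAt_id y))
  exact this

private lemma fderiv_eval {C : ℝ × ℝ → ((ℝ × ℝ) →L[ℝ] ℝ)} {p : ℝ × ℝ}
    (h : DifferentiableAt ℝ C p) (v w : ℝ × ℝ) :
    fderiv ℝ (fun q => C q v) p w = fderiv ℝ C p w v := by
  have h1 : HasFDerivAt (fun q => C q v)
      ((ContinuousLinearMap.apply ℝ ℝ v).comp (fderiv ℝ C p)) p := by
    have := (ContinuousLinearMap.apply ℝ ℝ v).hasFDerivAt.comp p h.hasFDerivAt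
    exact this
  rw [h1.fderiv]; rfl

/-- Intermediate integrals for `uₓᵧ = uₓuᵧ/(u − x)`: for a smooth solution `u` on an open
set `D` with `u ≠ x`, `uₓ ≠ 0`, `uᵧ ≠ 0` and `y ≠ 0`, one has
`∂ᵧ(uₓ/(u − x)) = 0`, `∂ᵧ(uₓₓ/uₓ + (1 − 2uₓ)/(u − x)) = 0` and `∂ₓ(uᵧᵧ/uᵧ − 1/y) = 0`. -/
theorem u3_intermediate_integrals (D : Set (ℝ × ℝ)) (hD : IsOpen D)
    (u : ℝ → ℝ → ℝ)
    (hu : ContDiffOn ℝ (⊤ : ℕ∞) (fun p : ℝ × ℝ => u p.1 p.2) D)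
    (hx : ∀ p ∈ D, u p.1 p.2 ≠ p.1)
    (hux : ∀ p ∈ D, pdx u p.1 p.2 ≠ 0) (huy : ∀ p ∈ D, pdy u p.1 p.2 ≠ 0)
    (hy0 : ∀ p ∈ D, p.2 ≠ 0)
    (heq : ∀ p ∈ D, pdx (pdy u) p.1 p.2
        = pdx u p.1 p.2 * pdy u p.1 p.2 / (u p.1 p.2 - p.1)) :
    (∀ p ∈ D, pdy (fun x y => pdx u x y / (u x y - x)) p.1 p.2 = 0) ∧
    (∀ p ∈ D, pdy (fun x y =>
        pdx (pdx u) x y / pdx u x y + (1 - 2 * pdx u x y) / (u x y - x)) p.1 p.2 = 0) ∧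
    (∀ p ∈ D, pdx (fun x y => pdy (pdy u) x y / pdy u x y - 1 / y) p.1 p.2 = 0) := by
  have h1 : ((⊤ : ℕ∞) : WithTop ℕ∞) ≠ 0 := by simp
  have h2 : minSmoothness ℝ 2 ≤ ((⊤ : ℕ∞) : WithTop ℕ∞) := by
    rw [minSmoothness_of_isRCLikeNormedField]
    rw [show ((2 : WithTop ℕ∞)) = ((2 : ℕ∞) : WithTop ℕ∞) from rfl]
    exact WithTop.coe_le_coe.2 le_top
  have hsum : ((⊤ : ℕ∞) : WithTop ℕ∞) + 1 ≤ ((⊤ : ℕ∞) : WithTop ℕ∞) := by norm_num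
  set F : ℝ × ℝ → ℝ := fun p => u p.1 p.2 with hFdef
  have hF : ContDiffOn ℝ ((⊤ : ℕ∞) : WithTop ℕ∞) F D := hu.of_le (by simp)
  set Φ : ℝ × ℝ → ((ℝ × ℝ) →L[ℝ] ℝ) := fderiv ℝ F with hΦdef
  have hΦ : ContDiffOn ℝ ((⊤ : ℕ∞) : WithTop ℕ∞) Φ D := hF.fderiv_of_isOpen hD hsum
  set G : ℝ × ℝ → ℝ := fun q => Φ q (1, 0) with hGdef
  set H : ℝ × ℝ → ℝ := fun q => Φ q (0, 1) with hHdef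
  have hG : ContDiffOn ℝ ((⊤ : ℕ∞) : WithTop ℕ∞) G D := hΦ.clm_apply contDiffOn_const
  have hH : ContDiffOn ℝ ((⊤ : ℕ∞) : WithTop ℕ∞) H D := hΦ.clm_apply contDiffOn_const
  set ΦG : ℝ × ℝ → ((ℝ × ℝ) →L[ℝ] ℝ) := fderiv ℝ G with hΦGdef
  set ΦH : ℝ × ℝ → ((ℝ × ℝ) →L[ℝ] ℝ) := fderiv ℝ H with hΦHdef
  have hΦG : ContDiffOn ℝ ((⊤ : ℕ∞) : WithTop ℕ∞) ΦG D := hG.fderiv_of_isOpen hD hsum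
  have hΦH : ContDiffOn ℝ ((⊤ : ℕ∞) : WithTop ℕ∞) ΦH D := hH.fderiv_of_isOpen hD hsum
  set G2 : ℝ × ℝ → ℝ := fun q => ΦG q (1, 0) with hG2def
  set H2 : ℝ × ℝ → ℝ := fun q => ΦH q (0, 1) with hH2def
  set K : ℝ × ℝ → ℝ := fun q => ΦG q (0, 1) with hKdef
  set L : ℝ × ℝ → ℝ := fun q => ΦH q (1, 0) with hLdef
  have hG2 : ContDiffOn ℝ ((⊤ : ℕ∞) : WithTop ℕ∞) G2 D := hΦG.clm_apply contDiffOn_const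
  have hH2 : ContDiffOn ℝ ((⊤ : ℕ∞) : WithTop ℕ∞) H2 D := hΦH.clm_apply contDiffOn_const
  have hK : ContDiffOn ℝ ((⊤ : ℕ∞) : WithTop ℕ∞) K D := hΦG.clm_apply contDiffOn_const
  have hL : ContDiffOn ℝ ((⊤ : ℕ∞) : WithTop ℕ∞) L D := hΦH.clm_apply contDiffOn_const
  -- differentiability at points of D
  have dF : ∀ x y, (x, y) ∈ D → DifferentiableAt ℝ F (x, y) := fun x y hp =>
    (hF.contDiffAt (hD.mem_nhds hp)).differentiableAt h1
  have dΦ : ∀ x y, (x, y) ∈ D → DifferentiableAt ℝ Φ (x, y) := fun x y hp =>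
    (hΦ.contDiffAt (hD.mem_nhds hp)).differentiableAt h1
  have dG : ∀ x y, (x, y) ∈ D → DifferentiableAt ℝ G (x, y) := fun x y hp =>
    (hG.contDiffAt (hD.mem_nhds hp)).differentiableAt h1
  have dH : ∀ x y, (x, y) ∈ D → DifferentiableAt ℝ H (x, y) := fun x y hp =>
    (hH.contDiffAt (hD.mem_nhds hp)).differentiableAt h1
  have dΦG : ∀ x y, (x, y) ∈ D → DifferentiableAt ℝ ΦG (x, y) := fun x y hp =>
    (hΦG.contDiffAt (hD.mem_nhds hp)).differentiableAt h1
  have dΦH : ∀ x y, (x, y) ∈ D → DifferentiableAt ℝ ΦH (x, y) := fun x y hp =>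
    (hΦH.contDiffAt (hD.mem_nhds hp)).differentiableAt h1
  have dG2 : ∀ x y, (x, y) ∈ D → DifferentiableAt ℝ G2 (x, y) := fun x y hp =>
    (hG2.contDiffAt (hD.mem_nhds hp)).differentiableAt h1
  have dH2 : ∀ x y, (x, y) ∈ D → DifferentiableAt ℝ H2 (x, y) := fun x y hp =>
    (hH2.contDiffAt (hD.mem_nhds hp)).differentiableAt h1
  have dK : ∀ x y, (x, y) ∈ D → DifferentiableAt ℝ K (x, y) := fun x y hp =>
    (hK.contDiffAt (hD.mem_nhds hp)).differentiableAt h1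
  have dL : ∀ x y, (x, y) ∈ D → DifferentiableAt ℝ L (x, y) := fun x y hp =>
    (hL.contDiffAt (hD.mem_nhds hp)).differentiableAt h1
  -- neighborhood facts
  have nbhdY : ∀ x y, (x, y) ∈ D → ∀ᶠ t in nhds y, (x, t) ∈ D := fun x y hp =>
    (continuous_const.prodMk continuous_id).continuousAt.preimage_mem_nhds (hD.mem_nhds hp)
  have nbhdX : ∀ x y, (x, y) ∈ D → ∀ᶠ s in nhds x, (s, y) ∈ D := fun x y hp =>
    (continuous_id.prodMk continuous_const).continuousAt.preimage_mem_nhds (hD.mem_nhds hp)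
  -- symmetry of second derivatives
  have hsymF : ∀ x y, (x, y) ∈ D →
      fderiv ℝ Φ (x, y) (0, 1) (1, 0) = fderiv ℝ Φ (x, y) (1, 0) (0, 1) := fun x y hp =>
    ((hF.contDiffAt (hD.mem_nhds hp)).isSymmSndFDerivAt h2) _ _
  have hsymG : ∀ x y, (x, y) ∈ D →
      fderiv ℝ ΦG (x, y) (0, 1) (1, 0) = fderiv ℝ ΦG (x, y) (1, 0) (0, 1) := fun x y hp =>
    ((hG.contDiffAt (hD.mem_nhds hp)).isSymmSndFDerivAt h2) _ _
  have hsymH : ∀ x y, (x, y) ∈ D →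
      fderiv ℝ ΦH (x, y) (0, 1) (1, 0) = fderiv ℝ ΦH (x, y) (1, 0) (0, 1) := fun x y hp =>
    ((hH.contDiffAt (hD.mem_nhds hp)).isSymmSndFDerivAt h2) _ _
  -- identification of first partial derivatives
  have e1 : ∀ x y, (x, y) ∈ D → pdx u x y = G (x, y) := fun x y hp =>
    (sliceFst (dF x y hp).hasFDerivAt).deriv
  have e2 : ∀ x y, (x, y) ∈ D → pdy u x y = H (x, y) := fun x y hp =>
    (sliceSnd (dF x y hp).hasFDerivAt).deriv
  -- second partial derivatives
  have e3 : ∀ x y, (x, y) ∈ D → pdx (pdx u) x y = G2 (x, y) := by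
    intro x y hp
    have hev : (fun s => pdx u s y) =ᶠ[nhds x] fun s => G (s, y) := by
      filter_upwards [nbhdX x y hp] with s hs using e1 s y hs
    calc pdx (pdx u) x y = deriv (fun s => G (s, y)) x := hev.deriv_eq
      _ = G2 (x, y) := (sliceFst (dG x y hp).hasFDerivAt).deriv
  have e4 : ∀ x y, (x, y) ∈ D → pdy (pdy u) x y = H2 (x, y) := by
    intro x y hp
    have hev : (fun t => pdy u x t) =ᶠ[nhds y] fun t => H (x, t) := by
      filter_upwards [nbhdY x y hp] with t ht using e2 x t ht
    calc pdy (pdy u) x y = deriv (fun t => H (x, t)) y := hev.deriv_eq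
      _ = H2 (x, y) := (sliceSnd (dH x y hp).hasFDerivAt).deriv
  -- the PDE in terms of the second fderiv
  have hkey : ∀ x y, (x, y) ∈ D →
      fderiv ℝ Φ (x, y) (1, 0) (0, 1) = G (x, y) * H (x, y) / (F (x, y) - x) := by
    intro x y hp
    have hev : (fun s => pdy u s y) =ᶠ[nhds x] fun s => H (s, y) := by
      filter_upwards [nbhdX x y hp] with s hs using e2 s y hs
    have : pdx (pdy u) x y = fderiv ℝ Φ (x, y) (1, 0) (0, 1) := by
      calc pdx (pdy u) x y = deriv (fun s => H (s, y)) x := hev.deriv_eq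
        _ = fderiv ℝ H (x, y) (1, 0) := (sliceFst (dH x y hp).hasFDerivAt).deriv
        _ = fderiv ℝ Φ (x, y) (1, 0) (0, 1) := fderiv_eval (dΦ x y hp) _ _
    rw [← this, heq (x, y) hp, e1 x y hp, e2 x y hp]
  -- values of mixed derivatives of G and H
  have vG01 : ∀ x y, (x, y) ∈ D →
      ΦG (x, y) (0, 1) = G (x, y) * H (x, y) / (F (x, y) - x) := by
    intro x y hp
    calc ΦG (x, y) (0, 1) = fderiv ℝ (fun q => Φ q (1, 0)) (x, y) (0, 1) := rfl
      _ = fderiv ℝ Φ (x, y) (0, 1) (1, 0) := fderiv_eval (dΦ x y hp) _ _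
      _ = fderiv ℝ Φ (x, y) (1, 0) (0, 1) := hsymF x y hp
      _ = G (x, y) * H (x, y) / (F (x, y) - x) := hkey x y hp
  have vH10 : ∀ x y, (x, y) ∈ D →
      ΦH (x, y) (1, 0) = G (x, y) * H (x, y) / (F (x, y) - x) := by
    intro x y hp
    calc ΦH (x, y) (1, 0) = fderiv ℝ (fun q => Φ q (0, 1)) (x, y) (1, 0) := rfl
      _ = fderiv ℝ Φ (x, y) (1, 0) (0, 1) := fderiv_eval (dΦ x y hp) _ _
      _ = G (x, y) * H (x, y) / (F (x, y) - x) := hkey x y hp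
  refine ⟨?_, ?_, ?_⟩
  · -- first intermediate integral
    rintro ⟨x, y⟩ hp
    have hne : F (x, y) - x ≠ 0 := sub_ne_zero.2 (hx (x, y) hp)
    have hev : (fun t => pdx u x t / (u x t - x)) =ᶠ[nhds y]
        fun t => G (x, t) / (F (x, t) - x) := by
      filter_upwards [nbhdY x y hp] with t ht
      rw [e1 x t ht]
    have hn : HasDerivAt (fun t => G (x, t)) (ΦG (x, y) (0, 1)) y :=
      sliceSnd (dG x y hp).hasFDerivAt
    have hd : HasDerivAt (fun t => F (x, t) - x) (H (x, y)) y := by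
      simpa using (sliceSnd (dF x y hp).hasFDerivAt).sub_const x
    have hq : deriv (fun t => G (x, t) / (F (x, t) - x)) y = _ := (hn.div hd hne).deriv
    show deriv (fun t => pdx u x t / (u x t - x)) y = 0
    rw [hev.deriv_eq, hq, vG01 x y hp]
    field_simp
    ring
  · -- second intermediate integral
    rintro ⟨x, y⟩ hp
    have hne : F (x, y) - x ≠ 0 := sub_ne_zero.2 (hx (x, y) hp)
    have haxne : G (x, y) ≠ 0 := by rw [← e1 x y hp]; exact hux (x, y) hp
    -- value of the third derivative u_xxy
    have hKeq : ∀ s t, (s, t) ∈ D → K (s, t) = G (s, t) * H (s, t) / (F (s, t) - s) :=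
      fun s t hq => vG01 s t hq
    have hGs : HasDerivAt (fun s => G (s, y)) (ΦG (x, y) (1, 0)) x :=
      sliceFst (dG x y hp).hasFDerivAt
    have hHs : HasDerivAt (fun s => H (s, y)) (ΦH (x, y) (1, 0)) x :=
      sliceFst (dH x y hp).hasFDerivAt
    have hFs : HasDerivAt (fun s => F (s, y) - s) (G (x, y) - 1) x := by
      exact (sliceFst (dF x y hp).hasFDerivAt).sub (hasDerivAt_id x)
    have hG2val : fderiv ℝ G2 (x, y) (0, 1) =
        ((ΦG (x, y) (1, 0) * H (x, y) + G (x, y) * ΦH (x, y) (1, 0)) * (F (x, y) - x)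
          - G (x, y) * H (x, y) * (G (x, y) - 1)) / (F (x, y) - x) ^ 2 := by
      have hev : (fun s => K (s, y)) =ᶠ[nhds x]
          fun s => G (s, y) * H (s, y) / (F (s, y) - s) := by
        filter_upwards [nbhdX x y hp] with s hs using hKeq s y hs
      calc fderiv ℝ G2 (x, y) (0, 1)
          = fderiv ℝ ΦG (x, y) (0, 1) (1, 0) := fderiv_eval (dΦG x y hp) _ _
        _ = fderiv ℝ ΦG (x, y) (1, 0) (0, 1) := hsymG x y hp
        _ = fderiv ℝ K (x, y) (1, 0) := (fderiv_eval (dΦG x y hp) _ _).symm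
        _ = deriv (fun s => K (s, y)) x := (sliceFst (dK x y hp).hasFDerivAt).deriv.symm
        _ = deriv (fun s => G (s, y) * H (s, y) / (F (s, y) - s)) x := hev.deriv_eq
        _ = _ := ((hGs.mul hHs).div hFs hne).deriv
    have hev : (fun t => pdx (pdx u) x t / pdx u x t + (1 - 2 * pdx u x t) / (u x t - x))
        =ᶠ[nhds y] fun t => G2 (x, t) / G (x, t) + (1 - 2 * G (x, t)) / (F (x, t) - x) := by
      filter_upwards [nbhdY x y hp] with t ht
      rw [e1 x t ht, e3 x t ht]
    have hn1 : HasDerivAt (fun t => G2 (x, t)) (fderiv ℝ G2 (x, y) (0, 1)) y :=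
      sliceSnd (dG2 x y hp).hasFDerivAt
    have hn2 : HasDerivAt (fun t => G (x, t)) (ΦG (x, y) (0, 1)) y :=
      sliceSnd (dG x y hp).hasFDerivAt
    have hd : HasDerivAt (fun t => F (x, t) - x) (H (x, y)) y := by
      simpa using (sliceSnd (dF x y hp).hasFDerivAt).sub_const x
    have hnum : HasDerivAt (fun t => 1 - 2 * G (x, t)) (0 - 2 * ΦG (x, y) (0, 1)) y :=
      (hasDerivAt_const y (1 : ℝ)).sub (hn2.const_mul 2)
    have htot : deriv (fun t => G2 (x, t) / G (x, t) + (1 - 2 * G (x, t)) / (F (x, t) - x)) y = _ :=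
      ((hn1.div hn2 haxne).add (hnum.div hd hne)).deriv
    show deriv
      (fun t => pdx (pdx u) x t / pdx u x t + (1 - 2 * pdx u x t) / (u x t - x)) y = 0
    rw [hev.deriv_eq, htot, hG2val, vG01 x y hp, vH10 x y hp]
    have hG2eq : G2 (x, y) = ΦG (x, y) (1, 0) := rfl
    rw [hG2eq]
    field_simp
    ring
  · -- third intermediate integral
    rintro ⟨x, y⟩ hp
    have hne : F (x, y) - x ≠ 0 := sub_ne_zero.2 (hx (x, y) hp)
    have hayne : H (x, y) ≠ 0 := by rw [← e2 x y hp]; exact huy (x, y) hp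
    have hLeq : ∀ s t, (s, t) ∈ D → L (s, t) = G (s, t) * H (s, t) / (F (s, t) - s) :=
      fun s t hq => vH10 s t hq
    have hGt : HasDerivAt (fun t => G (x, t)) (ΦG (x, y) (0, 1)) y :=
      sliceSnd (dG x y hp).hasFDerivAt
    have hHt : HasDerivAt (fun t => H (x, t)) (ΦH (x, y) (0, 1)) y :=
      sliceSnd (dH x y hp).hasFDerivAt
    have hFt : HasDerivAt (fun t => F (x, t) - x) (H (x, y)) y := by
      simpa using (sliceSnd (dF x y hp).hasFDerivAt).sub_const x
    have hH2val : fderiv ℝ H2 (x, y) (1, 0) =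
        ((ΦG (x, y) (0, 1) * H (x, y) + G (x, y) * ΦH (x, y) (0, 1)) * (F (x, y) - x)
          - G (x, y) * H (x, y) * H (x, y)) / (F (x, y) - x) ^ 2 := by
      have hev : (fun t => L (x, t)) =ᶠ[nhds y]
          fun t => G (x, t) * H (x, t) / (F (x, t) - x) := by
        filter_upwards [nbhdY x y hp] with t ht using hLeq x t ht
      calc fderiv ℝ H2 (x, y) (1, 0)
          = fderiv ℝ ΦH (x, y) (1, 0) (0, 1) := fderiv_eval (dΦH x y hp) _ _
        _ = fderiv ℝ ΦH (x, y) (0, 1) (1, 0) := (hsymH x y hp).symm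
        _ = fderiv ℝ L (x, y) (0, 1) := (fderiv_eval (dΦH x y hp) _ _).symm
        _ = deriv (fun t => L (x, t)) y := (sliceSnd (dL x y hp).hasFDerivAt).deriv.symm
        _ = deriv (fun t => G (x, t) * H (x, t) / (F (x, t) - x)) y := hev.deriv_eq
        _ = _ := ((hGt.mul hHt).div hFt hne).deriv
    have hev : (fun s => pdy (pdy u) s y / pdy u s y - 1 / y)
        =ᶠ[nhds x] fun s => H2 (s, y) / H (s, y) - 1 / y := by
      filter_upwards [nbhdX x y hp] with s hs
      rw [e2 s y hs, e4 s y hs]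
    have hn1 : HasDerivAt (fun s => H2 (s, y)) (fderiv ℝ H2 (x, y) (1, 0)) x :=
      sliceFst (dH2 x y hp).hasFDerivAt
    have hn2 : HasDerivAt (fun s => H (s, y)) (ΦH (x, y) (1, 0)) x :=
      sliceFst (dH x y hp).hasFDerivAt
    have htot : deriv (fun s => H2 (s, y) / H (s, y) - 1 / y) x = _ :=
      ((hn1.div hn2 hayne).sub_const (1 / y)).deriv
    show deriv (fun s => pdy (pdy u) s y / pdy u s y - 1 / y) x = 0
    rw [hev.deriv_eq, htot, hH2val, vG01 x y hp, vH10 x y hp]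
    have hH2eq : H2 (x, y) = ΦH (x, y) (0, 1) := rfl
    rw [hH2eq]
    field_simp
    ring
end
end

section
/- Let U¹, U² : ℝ² → ℝ be smooth functions solving the A₂ Toda system ∂_x∂_y U¹ = exp(2U¹ − U²) and ∂_x∂_y U² = exp(−U¹ + 2U²). Then the function U¹_{xx} + U²_{xx} − (U¹_x)² + U¹_x U²_x − (U²_x)² is an intermediate integral: its partial derivative with respect to y vanishes identically. Symmetrically, ∂_x( U¹_{yy} + U²_{yy} − (U¹_y)² + U¹_y U²_y − (U²_y)² ) = 0. -/
noncomputable section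

open Real

namespace TodaAux

def unc (f : ℝ → ℝ → ℝ) : ℝ × ℝ → ℝ := fun p => f p.1 p.2

variable {f : ℝ → ℝ → ℝ}

lemma hasDerivAt_x (hf : ContDiff ℝ (⊤ : ℕ∞) (unc f)) (x y : ℝ) :
    HasDerivAt (fun t => f t y) (fderiv ℝ (unc f) (x, y) (1, 0)) x := by
  have h1 : HasDerivAt (fun t : ℝ => (t, y)) ((1 : ℝ), (0 : ℝ)) x :=
    (hasDerivAt_id x).prodMk (hasDerivAt_const x y)
  exact ((hf.differentiable (by simp) (x, y)).hasFDerivAt).comp_hasDerivAt x h1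

lemma hasDerivAt_y (hf : ContDiff ℝ (⊤ : ℕ∞) (unc f)) (x y : ℝ) :
    HasDerivAt (fun t => f x t) (fderiv ℝ (unc f) (x, y) (0, 1)) y := by
  have h1 : HasDerivAt (fun t : ℝ => (x, t)) ((0 : ℝ), (1 : ℝ)) y :=
    (hasDerivAt_const y x).prodMk (hasDerivAt_id y)
  exact ((hf.differentiable (by simp) (x, y)).hasFDerivAt).comp_hasDerivAt y h1

lemma pdx_eq (hf : ContDiff ℝ (⊤ : ℕ∞) (unc f)) (x y : ℝ) :
    pdx f x y = fderiv ℝ (unc f) (x, y) (1, 0) := (hasDerivAt_x hf x y).deriv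

lemma pdy_eq (hf : ContDiff ℝ (⊤ : ℕ∞) (unc f)) (x y : ℝ) :
    pdy f x y = fderiv ℝ (unc f) (x, y) (0, 1) := (hasDerivAt_y hf x y).deriv

lemma hasDerivAt_pdx (hf : ContDiff ℝ (⊤ : ℕ∞) (unc f)) (x y : ℝ) :
    HasDerivAt (fun t => f t y) (pdx f x y) x := by
  rw [pdx_eq hf]; exact hasDerivAt_x hf x y

lemma hasDerivAt_pdy (hf : ContDiff ℝ (⊤ : ℕ∞) (unc f)) (x y : ℝ) :
    HasDerivAt (fun t => f x t) (pdy f x y) y := by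
  rw [pdy_eq hf]; exact hasDerivAt_y hf x y

lemma contDiff_fderiv_apply (hf : ContDiff ℝ (⊤ : ℕ∞) (unc f)) (v : ℝ × ℝ) :
    ContDiff ℝ (⊤ : ℕ∞) (fun p => fderiv ℝ (unc f) p v) :=
  (ContinuousLinearMap.apply ℝ ℝ v).contDiff.comp (hf.fderiv_right (by simp))

lemma contDiff_pdx (hf : ContDiff ℝ (⊤ : ℕ∞) (unc f)) : ContDiff ℝ (⊤ : ℕ∞) (unc (pdx f)) := by
  have h : unc (pdx f) = fun p => fderiv ℝ (unc f) p (1, 0) :=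
    funext fun p => pdx_eq hf p.1 p.2
  rw [h]; exact contDiff_fderiv_apply hf _

lemma contDiff_pdy (hf : ContDiff ℝ (⊤ : ℕ∞) (unc f)) : ContDiff ℝ (⊤ : ℕ∞) (unc (pdy f)) := by
  have h : unc (pdy f) = fun p => fderiv ℝ (unc f) p (0, 1) :=
    funext fun p => pdy_eq hf p.1 p.2
  rw [h]; exact contDiff_fderiv_apply hf _

lemma fderiv_fderiv_apply (hf : ContDiff ℝ (⊤ : ℕ∞) (unc f)) (z : ℝ × ℝ) (v w : ℝ × ℝ) :
    fderiv ℝ (fun p => fderiv ℝ (unc f) p w) z v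
      = fderiv ℝ (fderiv ℝ (unc f)) z v w := by
  have hd : DifferentiableAt ℝ (fderiv ℝ (unc f)) z :=
    ((hf.fderiv_right (m := (⊤ : ℕ∞)) (by simp)).differentiable (by simp)) z
  have h := ((ContinuousLinearMap.apply ℝ ℝ w).hasFDerivAt.comp z hd.hasFDerivAt).fderiv
  calc fderiv ℝ (fun p => fderiv ℝ (unc f) p w) z v
      = fderiv ℝ ((ContinuousLinearMap.apply ℝ ℝ w) ∘ fderiv ℝ (unc f)) z v := rfl
    _ = ((ContinuousLinearMap.apply ℝ ℝ w).comp (fderiv ℝ (fderiv ℝ (unc f)) z)) v := by rw [h]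
    _ = fderiv ℝ (fderiv ℝ (unc f)) z v w := rfl

lemma pdx_pdy_symm (hf : ContDiff ℝ (⊤ : ℕ∞) (unc f)) (x y : ℝ) :
    pdx (pdy f) x y = pdy (pdx f) x y := by
  have hsym : IsSymmSndFDerivAt ℝ (unc f) (x, y) :=
    (hf.contDiffAt).isSymmSndFDerivAt (by rw [minSmoothness_of_isRCLikeNormedField]; exact WithTop.coe_le_coe.mpr le_top)
  have h1 : unc (pdy f) = fun p => fderiv ℝ (unc f) p (0, 1) :=
    funext fun p => pdy_eq hf p.1 p.2
  have h2 : unc (pdx f) = fun p => fderiv ℝ (unc f) p (1, 0) :=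
    funext fun p => pdx_eq hf p.1 p.2
  rw [pdx_eq (contDiff_pdy hf) x y, pdy_eq (contDiff_pdx hf) x y, h1, h2,
    fderiv_fderiv_apply hf, fderiv_fderiv_apply hf]
  exact hsym _ _

/-- The main computation. -/
lemma key (U₁ U₂ : ℝ → ℝ → ℝ)
    (hU₁ : ContDiff ℝ (⊤ : ℕ∞) (unc U₁)) (hU₂ : ContDiff ℝ (⊤ : ℕ∞) (unc U₂))
    (heq₁ : ∀ x y : ℝ, pdx (pdy U₁) x y = Real.exp (2 * U₁ x y - U₂ x y))
    (heq₂ : ∀ x y : ℝ, pdx (pdy U₂) x y = Real.exp (-U₁ x y + 2 * U₂ x y)) :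
    ∀ x y : ℝ, pdy (fun x y =>
        pdx (pdx U₁) x y + pdx (pdx U₂) x y - (pdx U₁ x y) ^ 2
          + pdx U₁ x y * pdx U₂ x y - (pdx U₂ x y) ^ 2) x y = 0 := by
  intro x y
  -- mixed partial values
  have hm₁ : ∀ a b : ℝ, pdy (pdx U₁) a b = Real.exp (2 * U₁ a b - U₂ a b) := fun a b => by
    rw [← pdx_pdy_symm hU₁]; exact heq₁ a b
  have hm₂ : ∀ a b : ℝ, pdy (pdx U₂) a b = Real.exp (-U₁ a b + 2 * U₂ a b) := fun a b => by
    rw [← pdx_pdy_symm hU₂]; exact heq₂ a b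
  -- third-order values: pdy (pdx (pdx Uᵢ))
  have hExp₁ : ∀ a b : ℝ, pdy (pdx (pdx U₁)) a b
      = Real.exp (2 * U₁ a b - U₂ a b) * (2 * pdx U₁ a b - pdx U₂ a b) := by
    intro a b
    have hswap : pdy (pdx (pdx U₁)) a b = pdx (pdy (pdx U₁)) a b :=
      (pdx_pdy_symm (contDiff_pdx hU₁) a b).symm
    have hfun : pdy (pdx U₁) = fun s t => Real.exp (2 * U₁ s t - U₂ s t) :=
      funext fun s => funext fun t => hm₁ s t
    rw [hswap, hfun]
    have hd : HasDerivAt (fun s => Real.exp (2 * U₁ s b - U₂ s b))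
        (Real.exp (2 * U₁ a b - U₂ a b) * (2 * pdx U₁ a b - pdx U₂ a b)) a :=
      (((hasDerivAt_pdx hU₁ a b).const_mul 2).sub (hasDerivAt_pdx hU₂ a b)).exp
    exact hd.deriv
  have hExp₂ : ∀ a b : ℝ, pdy (pdx (pdx U₂)) a b
      = Real.exp (-U₁ a b + 2 * U₂ a b) * (-pdx U₁ a b + 2 * pdx U₂ a b) := by
    intro a b
    have hswap : pdy (pdx (pdx U₂)) a b = pdx (pdy (pdx U₂)) a b :=
      (pdx_pdy_symm (contDiff_pdx hU₂) a b).symm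
    have hfun : pdy (pdx U₂) = fun s t => Real.exp (-U₁ s t + 2 * U₂ s t) :=
      funext fun s => funext fun t => hm₂ s t
    rw [hswap, hfun]
    have hd : HasDerivAt (fun s => Real.exp (-U₁ s b + 2 * U₂ s b))
        (Real.exp (-U₁ a b + 2 * U₂ a b) * (-pdx U₁ a b + 2 * pdx U₂ a b)) a :=
      (((hasDerivAt_pdx hU₁ a b).neg).add ((hasDerivAt_pdx hU₂ a b).const_mul 2)).exp
    exact hd.deriv
  -- assemble
  have h1 : HasDerivAt (fun t => pdx (pdx U₁) x t) (pdy (pdx (pdx U₁)) x y) y :=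
    hasDerivAt_pdy (contDiff_pdx (contDiff_pdx hU₁)) x y
  have h2 : HasDerivAt (fun t => pdx (pdx U₂) x t) (pdy (pdx (pdx U₂)) x y) y :=
    hasDerivAt_pdy (contDiff_pdx (contDiff_pdx hU₂)) x y
  have hp : HasDerivAt (fun t => pdx U₁ x t) (pdy (pdx U₁) x y) y :=
    hasDerivAt_pdy (contDiff_pdx hU₁) x y
  have hq : HasDerivAt (fun t => pdx U₂ x t) (pdy (pdx U₂) x y) y :=
    hasDerivAt_pdy (contDiff_pdx hU₂) x y
  have htot : HasDerivAt (fun t =>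
      pdx (pdx U₁) x t + pdx (pdx U₂) x t - (pdx U₁ x t) ^ 2
        + pdx U₁ x t * pdx U₂ x t - (pdx U₂ x t) ^ 2)
      (pdy (pdx (pdx U₁)) x y + pdy (pdx (pdx U₂)) x y
        - 2 * pdx U₁ x y ^ 1 * pdy (pdx U₁) x y
        + (pdy (pdx U₁) x y * pdx U₂ x y + pdx U₁ x y * pdy (pdx U₂) x y)
        - 2 * pdx U₂ x y ^ 1 * pdy (pdx U₂) x y) y := by
    exact ((((h1.add h2).sub (hp.pow 2)).add (hp.mul hq)).sub (hq.pow 2))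
  have := htot.deriv
  show deriv (fun t =>
      pdx (pdx U₁) x t + pdx (pdx U₂) x t - (pdx U₁ x t) ^ 2
        + pdx U₁ x t * pdx U₂ x t - (pdx U₂ x t) ^ 2) y = 0
  rw [this, hExp₁, hExp₂, hm₁, hm₂]
  ring

end TodaAux

open TodaAux in
/-- Intermediate integrals for the A₂ Toda system: for smooth solutions `U¹, U²` of
`U¹ₓᵧ = e^{2U¹−U²}`, `U²ₓᵧ = e^{−U¹+2U²}`, the function
`U¹ₓₓ + U²ₓₓ − (U¹ₓ)² + U¹ₓU²ₓ − (U²ₓ)²` has vanishing `y`-derivative, and symmetrically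
in `x` and `y`. -/
theorem toda_intermediate_integrals (U₁ U₂ : ℝ → ℝ → ℝ)
    (hU₁ : ContDiff ℝ (⊤ : ℕ∞) (fun p : ℝ × ℝ => U₁ p.1 p.2))
    (hU₂ : ContDiff ℝ (⊤ : ℕ∞) (fun p : ℝ × ℝ => U₂ p.1 p.2))
    (heq₁ : ∀ x y : ℝ, pdx (pdy U₁) x y = Real.exp (2 * U₁ x y - U₂ x y))
    (heq₂ : ∀ x y : ℝ, pdx (pdy U₂) x y = Real.exp (-U₁ x y + 2 * U₂ x y)) :
    (∀ x y : ℝ, pdy (fun x y =>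
        pdx (pdx U₁) x y + pdx (pdx U₂) x y - (pdx U₁ x y) ^ 2
          + pdx U₁ x y * pdx U₂ x y - (pdx U₂ x y) ^ 2) x y = 0) ∧
    (∀ x y : ℝ, pdx (fun x y =>
        pdy (pdy U₁) x y + pdy (pdy U₂) x y - (pdy U₁ x y) ^ 2
          + pdy U₁ x y * pdy U₂ x y - (pdy U₂ x y) ^ 2) x y = 0) := by
  have hU₁' : ContDiff ℝ (⊤ : ℕ∞) (unc U₁) := hU₁
  have hU₂' : ContDiff ℝ (⊤ : ℕ∞) (unc U₂) := hU₂
  constructor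
  · exact key U₁ U₂ hU₁' hU₂' heq₁ heq₂
  · -- apply `key` to the swapped functions
    set V₁ : ℝ → ℝ → ℝ := fun x y => U₁ y x with hV₁def
    set V₂ : ℝ → ℝ → ℝ := fun x y => U₂ y x with hV₂def
    have hswap : ContDiff ℝ (⊤ : ℕ∞) (fun p : ℝ × ℝ => (p.2, p.1)) :=
      contDiff_snd.prodMk contDiff_fst
    have hV₁ : ContDiff ℝ (⊤ : ℕ∞) (unc V₁) := hU₁'.comp hswap
    have hV₂ : ContDiff ℝ (⊤ : ℕ∞) (unc V₂) := hU₂'.comp hswap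
    have heqV₁ : ∀ x y : ℝ, pdx (pdy V₁) x y = Real.exp (2 * V₁ x y - V₂ x y) := by
      intro x y
      have h : pdx (pdy V₁) x y = pdy (pdx U₁) y x := rfl
      rw [h, ← pdx_pdy_symm hU₁' y x]
      exact heq₁ y x
    have heqV₂ : ∀ x y : ℝ, pdx (pdy V₂) x y = Real.exp (-V₁ x y + 2 * V₂ x y) := by
      intro x y
      have h : pdx (pdy V₂) x y = pdy (pdx U₂) y x := rfl
      rw [h, ← pdx_pdy_symm hU₂' y x]
      exact heq₂ y x
    intro x y
    exact key V₁ V₂ hV₁ hV₂ heqV₁ heqV₂ y x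
end
end

section
/- Let D ⊆ ℝ² be open and let U : D → ℝ be a smooth function with ∂_Y∂_Y U ≠ 0 on D satisfying the equation 3 U_{XX} (U_{YY})³ + 1 = 0. Then the following four characteristic identities hold on D, where Ǐ¹ := U_{XY} + 1/U_{YY}, Ǐ² := U_Y − Ǐ¹·X, Î¹ := U_{XY} − 1/U_{YY}, Î² := U_Y − Î¹·X: (i) ∂_Y Ǐ¹ + (U_{YY})² ∂_X Ǐ¹ = 0; (ii) ∂_Y Ǐ² + (U_{YY})² ∂_X Ǐ² = 0; (iii) ∂_Y Î¹ − (U_{YY})² ∂_X Î¹ = 0; (iv) ∂_Y Î² − (U_{YY})² ∂_X Î² = 0. -/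
noncomputable section

open Real

/-- `Ǐ¹ = U_{XY} + 1/U_{YY}`. -/
def checkI₁ (U : ℝ → ℝ → ℝ) (x y : ℝ) : ℝ := pdx (pdy U) x y + 1 / pdy (pdy U) x y

/-- `Ǐ² = U_Y − Ǐ¹·X`. -/
def checkI₂ (U : ℝ → ℝ → ℝ) (x y : ℝ) : ℝ := pdy U x y - checkI₁ U x y * x

/-- `Î¹ = U_{XY} − 1/U_{YY}`. -/
def hatI₁ (U : ℝ → ℝ → ℝ) (x y : ℝ) : ℝ := pdx (pdy U) x y - 1 / pdy (pdy U) x y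

/-- `Î² = U_Y − Î¹·X`. -/
def hatI₂ (U : ℝ → ℝ → ℝ) (x y : ℝ) : ℝ := pdy U x y - hatI₁ U x y * x

section Aux

variable {E : Type*} [NormedAddCommGroup E] [NormedSpace ℝ E]

lemma sliceX {F : ℝ × ℝ → E} {x y : ℝ} (h : DifferentiableAt ℝ F (x, y)) :
    HasDerivAt (fun t => F (t, y)) (fderiv ℝ F (x, y) (1, 0)) x := by
  have h1 : HasDerivAt (fun t : ℝ => (t, y)) ((1 : ℝ), (0 : ℝ)) x :=
    (hasDerivAt_id x).prodMk (hasDerivAt_const x y)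
  exact h.hasFDerivAt.comp_hasDerivAt x h1

lemma sliceY {F : ℝ × ℝ → E} {x y : ℝ} (h : DifferentiableAt ℝ F (x, y)) :
    HasDerivAt (fun t => F (x, t)) (fderiv ℝ F (x, y) (0, 1)) y := by
  have h1 : HasDerivAt (fun t : ℝ => (x, t)) ((0 : ℝ), (1 : ℝ)) y :=
    (hasDerivAt_const y x).prodMk (hasDerivAt_id y)
  exact h.hasFDerivAt.comp_hasDerivAt y h1

variable {D : Set (ℝ × ℝ)} {G : ℝ → ℝ → ℝ} {x y : ℝ}

lemma memX (hD : IsOpen D) (hp : (x, y) ∈ D) : ∀ᶠ t in nhds x, (t, y) ∈ D :=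
  ((continuous_id.prodMk continuous_const).continuousAt).eventually_mem (hD.mem_nhds hp)

lemma memY (hD : IsOpen D) (hp : (x, y) ∈ D) : ∀ᶠ t in nhds y, (x, t) ∈ D :=
  ((continuous_const.prodMk continuous_id).continuousAt).eventually_mem (hD.mem_nhds hp)

lemma diffAt (hD : IsOpen D) (hG : ContDiffOn ℝ (⊤ : ℕ∞) (fun p : ℝ × ℝ => G p.1 p.2) D)
    (hp : (x, y) ∈ D) : DifferentiableAt ℝ (fun p : ℝ × ℝ => G p.1 p.2) (x, y) :=
  (hG.contDiffAt (hD.mem_nhds hp)).differentiableAt (by simp)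

lemma hasDerivAt_pdx (hD : IsOpen D) (hG : ContDiffOn ℝ (⊤ : ℕ∞) (fun p : ℝ × ℝ => G p.1 p.2) D)
    (hp : (x, y) ∈ D) : HasDerivAt (fun t => G t y) (pdx G x y) x := by
  have h := sliceX (diffAt hD hG hp)
  have : pdx G x y = fderiv ℝ (fun p : ℝ × ℝ => G p.1 p.2) (x, y) (1, 0) := h.deriv
  rw [this]; exact h

lemma hasDerivAt_pdy (hD : IsOpen D) (hG : ContDiffOn ℝ (⊤ : ℕ∞) (fun p : ℝ × ℝ => G p.1 p.2) D)
    (hp : (x, y) ∈ D) : HasDerivAt (fun t => G x t) (pdy G x y) y := by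
  have h := sliceY (diffAt hD hG hp)
  have : pdy G x y = fderiv ℝ (fun p : ℝ × ℝ => G p.1 p.2) (x, y) (0, 1) := h.deriv
  rw [this]; exact h

lemma contDiffOn_pd_aux (hD : IsOpen D)
    (hG : ContDiffOn ℝ (⊤ : ℕ∞) (fun p : ℝ × ℝ => G p.1 p.2) D) (v : ℝ × ℝ) :
    ContDiffOn ℝ (⊤ : ℕ∞) (fun p : ℝ × ℝ => fderiv ℝ (fun p : ℝ × ℝ => G p.1 p.2) p v) D := by
  have h1 : ContDiffOn ℝ (⊤ : ℕ∞) (fderiv ℝ (fun p : ℝ × ℝ => G p.1 p.2)) D :=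
    hG.fderiv_of_isOpen hD (by exact_mod_cast le_top)
  exact (ContinuousLinearMap.apply ℝ ℝ v).contDiff.comp_contDiffOn h1

lemma contDiffOn_pdx (hD : IsOpen D)
    (hG : ContDiffOn ℝ (⊤ : ℕ∞) (fun p : ℝ × ℝ => G p.1 p.2) D) :
    ContDiffOn ℝ (⊤ : ℕ∞) (fun p : ℝ × ℝ => pdx G p.1 p.2) D := by
  refine (contDiffOn_pd_aux hD hG (1, 0)).congr fun p hp => ?_
  exact (sliceX (diffAt hD hG hp)).deriv

lemma contDiffOn_pdy (hD : IsOpen D)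
    (hG : ContDiffOn ℝ (⊤ : ℕ∞) (fun p : ℝ × ℝ => G p.1 p.2) D) :
    ContDiffOn ℝ (⊤ : ℕ∞) (fun p : ℝ × ℝ => pdy G p.1 p.2) D := by
  refine (contDiffOn_pd_aux hD hG (0, 1)).congr fun p hp => ?_
  exact (sliceY (diffAt hD hG hp)).deriv

lemma pd_comm (hD : IsOpen D)
    (hG : ContDiffOn ℝ (⊤ : ℕ∞) (fun p : ℝ × ℝ => G p.1 p.2) D) (hp : (x, y) ∈ D) :
    pdx (pdy G) x y = pdy (pdx G) x y := by
  set F : ℝ × ℝ → ℝ := fun p => G p.1 p.2 with hF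
  set Φ : ℝ × ℝ → (ℝ × ℝ →L[ℝ] ℝ) := fun p => fderiv ℝ F p with hΦ
  have hΦs : ContDiffOn ℝ (⊤ : ℕ∞) Φ D := hG.fderiv_of_isOpen hD (by exact_mod_cast le_top)
  have hΦd : DifferentiableAt ℝ Φ (x, y) :=
    (hΦs.contDiffAt (hD.mem_nhds hp)).differentiableAt (by simp)
  have hsymm : IsSymmSndFDerivAt ℝ F (x, y) :=
    (hG.contDiffAt (hD.mem_nhds hp)).isSymmSndFDerivAt (by rw [minSmoothness_of_isRCLikeNormedField]; exact WithTop.coe_le_coe.2 (le_top : (2:ℕ∞) ≤ ⊤))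
  have e1 : pdx (pdy G) x y = fderiv ℝ Φ (x, y) (1, 0) (0, 1) := by
    have heq : (fun t => pdy G t y) =ᶠ[nhds x] (fun t => Φ (t, y) (0, 1)) := by
      filter_upwards [memX hD hp] with t ht
      exact (sliceY (diffAt hD hG ht)).deriv
    have hd : HasDerivAt (fun t => Φ (t, y)) (fderiv ℝ Φ (x, y) (1, 0)) x := sliceX hΦd
    have hd2 : HasDerivAt (fun t => Φ (t, y) (0, 1)) (fderiv ℝ Φ (x, y) (1, 0) (0, 1)) x :=
      (ContinuousLinearMap.apply ℝ ℝ ((0 : ℝ), (1 : ℝ))).hasFDerivAt.comp_hasDerivAt x hd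
    calc pdx (pdy G) x y = deriv (fun t => Φ (t, y) (0, 1)) x := heq.deriv_eq
      _ = _ := hd2.deriv
  have e2 : pdy (pdx G) x y = fderiv ℝ Φ (x, y) (0, 1) (1, 0) := by
    have heq : (fun t => pdx G x t) =ᶠ[nhds y] (fun t => Φ (x, t) (1, 0)) := by
      filter_upwards [memY hD hp] with t ht
      exact (sliceX (diffAt hD hG ht)).deriv
    have hd : HasDerivAt (fun t => Φ (x, t)) (fderiv ℝ Φ (x, y) (0, 1)) y := sliceY hΦd
    have hd2 : HasDerivAt (fun t => Φ (x, t) (1, 0)) (fderiv ℝ Φ (x, y) (0, 1) (1, 0)) y :=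
      (ContinuousLinearMap.apply ℝ ℝ ((1 : ℝ), (0 : ℝ))).hasFDerivAt.comp_hasDerivAt y hd
    calc pdy (pdx G) x y = deriv (fun t => Φ (x, t) (1, 0)) y := heq.deriv_eq
      _ = _ := hd2.deriv
  rw [e1, e2]
  exact hsymm (1, 0) (0, 1)

end Aux

lemma key {D : Set (ℝ × ℝ)} (hD : IsOpen D) {U : ℝ → ℝ → ℝ}
    (hU : ContDiffOn ℝ (⊤ : ℕ∞) (fun p : ℝ × ℝ => U p.1 p.2) D)
    (hUyy : ∀ p ∈ D, pdy (pdy U) p.1 p.2 ≠ 0)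
    (heq : ∀ p ∈ D, 3 * pdx (pdx U) p.1 p.2 * (pdy (pdy U) p.1 p.2) ^ 3 + 1 = 0)
    {x y : ℝ} (hp : (x, y) ∈ D) :
    (pdy (checkI₁ U) x y + (pdy (pdy U) x y) ^ 2 * pdx (checkI₁ U) x y = 0) ∧
    (pdy (checkI₂ U) x y + (pdy (pdy U) x y) ^ 2 * pdx (checkI₂ U) x y = 0) ∧
    (pdy (hatI₁ U) x y - (pdy (pdy U) x y) ^ 2 * pdx (hatI₁ U) x y = 0) ∧
    (pdy (hatI₂ U) x y - (pdy (pdy U) x y) ^ 2 * pdx (hatI₂ U) x y = 0) := by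
  have hV := contDiffOn_pdy hD hU
  have hA := contDiffOn_pdx hD hV
  have hW := contDiffOn_pdy hD hV
  have hX := contDiffOn_pdx hD hU
  have hC := contDiffOn_pdx hD hX
  have hw : pdy (pdy U) x y ≠ 0 := hUyy (x, y) hp
  have hAy := hasDerivAt_pdy hD hA hp
  have hAx := hasDerivAt_pdx hD hA hp
  have hWy := hasDerivAt_pdy hD hW hp
  have hWx := hasDerivAt_pdx hD hW hp
  have hVy := hasDerivAt_pdy hD hV hp
  have hVx := hasDerivAt_pdx hD hV hp
  have hCy := hasDerivAt_pdy hD hC hp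
  -- symmetry of mixed partials
  have F1 : pdx (pdy (pdy U)) x y = pdy (pdx (pdy U)) x y := pd_comm hD hV hp
  have F2 : pdy (pdx (pdx U)) x y = pdx (pdx (pdy U)) x y := by
    have h1 : pdx (pdy (pdx U)) x y = pdy (pdx (pdx U)) x y := pd_comm hD hX hp
    have h2 : pdx (pdy (pdx U)) x y = pdx (pdx (pdy U)) x y := by
      show deriv (fun t => pdy (pdx U) t y) x = deriv (fun t => pdx (pdy U) t y) x
      apply Filter.EventuallyEq.deriv_eq
      filter_upwards [memX hD hp] with t ht
      exact (pd_comm hD hU ht).symm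
    exact h1.symm.trans h2
  -- PDE at the point and differentiated in y
  have F3 : 3 * pdx (pdx U) x y * (pdy (pdy U) x y) ^ 3 + 1 = 0 := heq (x, y) hp
  have F4 : 3 * pdy (pdx (pdx U)) x y * (pdy (pdy U) x y) ^ 3
      + 9 * pdx (pdx U) x y * (pdy (pdy U) x y) ^ 2 * pdy (pdy (pdy U)) x y = 0 := by
    have hE : (fun t => 3 * pdx (pdx U) x t * (pdy (pdy U) x t) ^ 3 + 1)
        =ᶠ[nhds y] (fun _ => 0) := by
      filter_upwards [memY hD hp] with t ht using heq (x, t) ht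
    have hder : HasDerivAt (fun t => 3 * pdx (pdx U) x t * (pdy (pdy U) x t) ^ 3 + 1)
        (3 * pdy (pdx (pdx U)) x y * (pdy (pdy U) x y) ^ 3
          + 9 * pdx (pdx U) x y * (pdy (pdy U) x y) ^ 2 * pdy (pdy (pdy U)) x y) y := by
      have h := ((hCy.const_mul (3 : ℝ)).mul (hWy.pow 3)).add_const 1
      exact h.congr_deriv (by simp only [Pi.pow_apply]; push_cast; ring)
    rw [← hder.deriv, hE.deriv_eq]
    simp
  -- key consequence
  have K : pdx (pdx (pdy U)) x y * (pdy (pdy U) x y) ^ 4 = pdy (pdy (pdy U)) x y := by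
    rw [F2] at F4
    linear_combination (pdy (pdy U) x y / 3) * F4 - pdy (pdy (pdy U)) x y * F3
  -- slice derivatives of checkI₁ / hatI₁
  have hI1y : HasDerivAt (fun t => checkI₁ U x t)
      (pdy (pdx (pdy U)) x y - pdy (pdy (pdy U)) x y / (pdy (pdy U) x y) ^ 2) y := by
    have h := hAy.add (hWy.inv hw)
    have hfun : (fun t => checkI₁ U x t)
        = fun t => pdx (pdy U) x t + (pdy (pdy U) x t)⁻¹ := by
      funext t; simp [checkI₁, one_div]
    rw [hfun]
    exact h.congr_deriv (by ring)
  have hI1x : HasDerivAt (fun t => checkI₁ U t y)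
      (pdx (pdx (pdy U)) x y - pdx (pdy (pdy U)) x y / (pdy (pdy U) x y) ^ 2) x := by
    have h := hAx.add (hWx.inv hw)
    have hfun : (fun t => checkI₁ U t y)
        = fun t => pdx (pdy U) t y + (pdy (pdy U) t y)⁻¹ := by
      funext t; simp [checkI₁, one_div]
    rw [hfun]
    exact h.congr_deriv (by ring)
  have hJ1y : HasDerivAt (fun t => hatI₁ U x t)
      (pdy (pdx (pdy U)) x y + pdy (pdy (pdy U)) x y / (pdy (pdy U) x y) ^ 2) y := by
    have h := hAy.sub (hWy.inv hw)
    have hfun : (fun t => hatI₁ U x t)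
        = fun t => pdx (pdy U) x t - (pdy (pdy U) x t)⁻¹ := by
      funext t; simp [hatI₁, one_div]
    rw [hfun]
    exact h.congr_deriv (by ring)
  have hJ1x : HasDerivAt (fun t => hatI₁ U t y)
      (pdx (pdx (pdy U)) x y + pdx (pdy (pdy U)) x y / (pdy (pdy U) x y) ^ 2) x := by
    have h := hAx.sub (hWx.inv hw)
    have hfun : (fun t => hatI₁ U t y)
        = fun t => pdx (pdy U) t y - (pdy (pdy U) t y)⁻¹ := by
      funext t; simp [hatI₁, one_div]
    rw [hfun]
    exact h.congr_deriv (by ring)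
  -- part (i)
  have part1 : pdy (checkI₁ U) x y + (pdy (pdy U) x y) ^ 2 * pdx (checkI₁ U) x y = 0 := by
    have e1 : pdy (checkI₁ U) x y = _ := hI1y.deriv
    have e2 : pdx (checkI₁ U) x y = _ := hI1x.deriv
    rw [e1, e2, ← F1]
    field_simp
    linear_combination K
  -- part (iii)
  have part3 : pdy (hatI₁ U) x y - (pdy (pdy U) x y) ^ 2 * pdx (hatI₁ U) x y = 0 := by
    have e1 : pdy (hatI₁ U) x y = _ := hJ1y.deriv
    have e2 : pdx (hatI₁ U) x y = _ := hJ1x.deriv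
    rw [e1, e2, ← F1]
    field_simp
    linear_combination (-1 : ℝ) * K
  -- parts (ii) and (iv)
  have hI1y' : HasDerivAt (fun t => checkI₁ U x t) (pdy (checkI₁ U) x y) y := by
    have e : pdy (checkI₁ U) x y = _ := hI1y.deriv
    rw [e]; exact hI1y
  have hI1x' : HasDerivAt (fun t => checkI₁ U t y) (pdx (checkI₁ U) x y) x := by
    have e : pdx (checkI₁ U) x y = _ := hI1x.deriv
    rw [e]; exact hI1x
  have hJ1y' : HasDerivAt (fun t => hatI₁ U x t) (pdy (hatI₁ U) x y) y := by
    have e : pdy (hatI₁ U) x y = _ := hJ1y.deriv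
    rw [e]; exact hJ1y
  have hJ1x' : HasDerivAt (fun t => hatI₁ U t y) (pdx (hatI₁ U) x y) x := by
    have e : pdx (hatI₁ U) x y = _ := hJ1x.deriv
    rw [e]; exact hJ1x
  have part2 : pdy (checkI₂ U) x y + (pdy (pdy U) x y) ^ 2 * pdx (checkI₂ U) x y = 0 := by
    have hy2 : HasDerivAt (fun t => checkI₂ U x t)
        (pdy (pdy U) x y - pdy (checkI₁ U) x y * x) y := hVy.sub (hI1y'.mul_const x)
    have hx2 : HasDerivAt (fun t => checkI₂ U t y)
        (pdx (pdy U) x y - (pdx (checkI₁ U) x y * x + checkI₁ U x y * 1)) x :=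
      hVx.sub (hI1x'.mul (hasDerivAt_id x))
    have e1 : pdy (checkI₂ U) x y = _ := hy2.deriv
    have e2 : pdx (checkI₂ U) x y = _ := hx2.deriv
    rw [e1, e2]
    have hc : checkI₁ U x y = pdx (pdy U) x y + 1 / pdy (pdy U) x y := rfl
    rw [hc]
    field_simp
    linear_combination (-x) * part1
  have part4 : pdy (hatI₂ U) x y - (pdy (pdy U) x y) ^ 2 * pdx (hatI₂ U) x y = 0 := by
    have hy2 : HasDerivAt (fun t => hatI₂ U x t)
        (pdy (pdy U) x y - pdy (hatI₁ U) x y * x) y := hVy.sub (hJ1y'.mul_const x)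
    have hx2 : HasDerivAt (fun t => hatI₂ U t y)
        (pdx (pdy U) x y - (pdx (hatI₁ U) x y * x + hatI₁ U x y * 1)) x :=
      hVx.sub (hJ1x'.mul (hasDerivAt_id x))
    have e1 : pdy (hatI₂ U) x y = _ := hy2.deriv
    have e2 : pdx (hatI₂ U) x y = _ := hx2.deriv
    rw [e1, e2]
    have hc : hatI₁ U x y = pdx (pdy U) x y - 1 / pdy (pdy U) x y := rfl
    rw [hc]
    field_simp
    linear_combination (-x) * part3
  exact ⟨part1, part2, part3, part4⟩


/-- Intermediate integrals of the Monge–Ampère equation `3U_{XX}U_{YY}³ + 1 = 0`: the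
quantities `Ǐ¹, Ǐ²` are annihilated by `∂_Y + U_{YY}²∂_X` and `Î¹, Î²` by
`∂_Y − U_{YY}²∂_X` on solutions. -/
theorem hilbert_cartan_MA_intermediate_integrals (D : Set (ℝ × ℝ)) (hD : IsOpen D)
    (U : ℝ → ℝ → ℝ)
    (hU : ContDiffOn ℝ (⊤ : ℕ∞) (fun p : ℝ × ℝ => U p.1 p.2) D)
    (hUyy : ∀ p ∈ D, pdy (pdy U) p.1 p.2 ≠ 0)
    (heq : ∀ p ∈ D, 3 * pdx (pdx U) p.1 p.2 * (pdy (pdy U) p.1 p.2) ^ 3 + 1 = 0) :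
    (∀ p ∈ D, pdy (checkI₁ U) p.1 p.2
        + (pdy (pdy U) p.1 p.2) ^ 2 * pdx (checkI₁ U) p.1 p.2 = 0) ∧
    (∀ p ∈ D, pdy (checkI₂ U) p.1 p.2
        + (pdy (pdy U) p.1 p.2) ^ 2 * pdx (checkI₂ U) p.1 p.2 = 0) ∧
    (∀ p ∈ D, pdy (hatI₁ U) p.1 p.2
        - (pdy (pdy U) p.1 p.2) ^ 2 * pdx (hatI₁ U) p.1 p.2 = 0) ∧
    (∀ p ∈ D, pdy (hatI₂ U) p.1 p.2
        - (pdy (pdy U) p.1 p.2) ^ 2 * pdx (hatI₂ U) p.1 p.2 = 0) := by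
  have hU' : ContDiffOn ℝ ((⊤ : ℕ∞) : WithTop ℕ∞) (fun p : ℝ × ℝ => U p.1 p.2) D :=
    hU.of_le (by simp)
  exact ⟨fun p hp => (key hD hU' hUyy heq hp).1,
    fun p hp => (key hD hU' hUyy heq hp).2.1,
    fun p hp => (key hD hU' hUyy heq hp).2.2.1,
    fun p hp => (key hD hU' hUyy heq hp).2.2.2⟩
end
end
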